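/- arXiv:1901.09191 — 8 statements merged into one kernel-verified Lean document; each statement's English description precedes it below -/
import Mathlib

section
/- Let Ω be the antisymmetric d×d matrix associated to irreducible combinatorial data π = (π_t, π_b) on an alphabet A, with entries Ω_{αβ} = +1 if π_t(α) < π_t(β) and π_b(α) > π_b(β), Ω_{αβ} = −1 if π_t(α) > π_t(β) and π_b(α) < π_b(β), and 0 otherwise. If γ is an arrow of the Rauzy diagram from π to π' of top type with winner α_t (π_t(α_t)=d) and loser α_b (π_b(α_b)=d), and B_γ = I + E_{α_b α_t}, then B_γ Ω_π (B_γ)^T = Ω_{π'}. -/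
/-!
Left multiplication by `B_γ = I + E_{αb αt}` adds row `αt` to row `αb`, right multiplication by
`B_γᵀ` adds column `αt` to column `αb`. Because `αt` is last on top and `αb` last on bottom, row
`αb` of `Ω_π` is `+1` exactly at the letters after `αb` on top, and row `αt` is `-1` exactly at
the letters after `αt` on bottom; their sum is row `αb` of `Ω_{π'}`, where `αb` now sits right
after `αt` on the bottom. The column follows by antisymmetry, and all other entries agree since
moving `αb` changes no other relative order.
-/

open Matrix Function

namespace Matrix

theorem transpose_transvection {n R : Type*} [DecidableEq n] [CommRing R] (i j : n) (c : R) :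
    (transvection i j c)ᵀ = transvection j i c := by
  simp [transvection, transpose_single]

end Matrix

section RauzyForm

variable {A ι : Type*} [LinearOrder ι]

/-- The matrix `Ω_π` of combinatorial data `π = (πt, πb)`. -/
def rauzyForm (πt πb : A → ι) : Matrix A A ℝ :=
  Matrix.of fun α β =>
    if πt α < πt β ∧ πb β < πb α then 1
    else if πt β < πt α ∧ πb α < πb β then -1 else 0

theorem rauzyForm_apply_swap (πt πb : A → ι) (α β : A) :
    rauzyForm πt πb β α = -rauzyForm πt πb α β := by
  simp only [rauzyForm, of_apply]
  grind

theorem rauzyForm_apply_self (πt πb : A → ι) (α : A) : rauzyForm πt πb α α = 0 := by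
  simp [rauzyForm]

theorem rauzyForm_apply_congr {πt πb σt σb : A → ι} {α β : A}
    (ht : σt α < σt β ↔ πt α < πt β) (ht' : σt β < σt α ↔ πt β < πt α)
    (hb : σb α < σb β ↔ πb α < πb β) (hb' : σb β < σb α ↔ πb β < πb α) :
    rauzyForm σt σb α β = rauzyForm πt πb α β := by
  simp only [rauzyForm, of_apply, ht, ht', hb, hb']

theorem rauzyForm_loser_row {πt πb π'b : A → ι} (hπt : Injective πt) {αt αb β : A}
    (hαt : ∀ α, πt α ≤ πt αt) (hβ : β ≠ αb) (hβb : πb β < πb αb)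
    (hlt : π'b β < π'b αb ↔ πb β ≤ πb αt) (hgt : π'b αb < π'b β ↔ πb αt < πb β) :
    rauzyForm πt π'b αb β = rauzyForm πt πb αb β + rauzyForm πt πb αt β := by
  have hβt : πt β ≠ πt αb := hπt.ne hβ
  have hβt' : πt β = πt αt → πb β = πb αt := fun h => by rw [hπt h]
  have hβt_le := hαt β
  simp only [rauzyForm, of_apply, hlt, hgt]
  grind

end RauzyForm

/-- `π'b` is obtained from `πb` by moving the last letter `αb` to the position right after `αt`
(positions are `0`-indexed). -/
structure IsTopRauzyMove {A : Type*} {d : ℕ} (πb π'b : A ≃ Fin d) (αt αb : A) : Prop where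
  loser_last : (πb αb : ℕ) = d - 1
  eq_of_le : ∀ α, (πb α : ℕ) ≤ (πb αt : ℕ) → π'b α = πb α
  loser : (π'b αb : ℕ) = (πb αt : ℕ) + 1
  succ_of_lt : ∀ α, (πb αt : ℕ) < (πb α : ℕ) → (πb α : ℕ) < d - 1 →
    (π'b α : ℕ) = (πb α : ℕ) + 1

namespace IsTopRauzyMove

variable {A : Type*} {d : ℕ} {πb π'b : A ≃ Fin d} {αt αb : A}

theorem lt_loser_of_ne (h : IsTopRauzyMove πb π'b αt αb) {α : A} (hα : α ≠ αb) :
    πb α < πb αb := by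
  have := (πb α).isLt
  have : (πb α : ℕ) ≠ πb αb := fun h' => hα (πb.injective (Fin.ext h'))
  have := h.loser_last
  rw [Fin.lt_def]
  omega

theorem val_of_ne (h : IsTopRauzyMove πb π'b αt αb) {α : A} (hα : α ≠ αb) :
    (π'b α : ℕ) = if (πb α : ℕ) ≤ (πb αt : ℕ) then (πb α : ℕ) else (πb α : ℕ) + 1 := by
  split_ifs with hle
  · rw [h.eq_of_le α hle]
  · have := Fin.lt_def.1 (h.lt_loser_of_ne hα)
    exact h.succ_of_lt α (by omega) (by omega)

theorem lt_iff_of_ne (h : IsTopRauzyMove πb π'b αt αb) {α β : A} (hα : α ≠ αb)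
    (hβ : β ≠ αb) : π'b α < π'b β ↔ πb α < πb β := by
  simp only [Fin.lt_def, h.val_of_ne hα, h.val_of_ne hβ]
  split_ifs <;> omega

theorem lt_loser_iff (h : IsTopRauzyMove πb π'b αt αb) {α : A} (hα : α ≠ αb) :
    π'b α < π'b αb ↔ πb α ≤ πb αt := by
  simp only [Fin.lt_def, Fin.le_def, h.loser, h.val_of_ne hα]
  split_ifs <;> omega

theorem loser_lt_iff (h : IsTopRauzyMove πb π'b αt αb) {α : A} (hα : α ≠ αb) :
    π'b αb < π'b α ↔ πb αt < πb α := by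
  simp only [Fin.lt_def, h.loser, h.val_of_ne hα]
  split_ifs <;> omega

end IsTopRauzyMove

theorem stmt_0_general {A : Type*} [Fintype A] [DecidableEq A]
    (d : ℕ)
    (πt πb π't π'b : A ≃ Fin d)
    (Ω Ω' : Matrix A A ℝ)
    (hΩ : ∀ α β, Ω α β =
      if πt α < πt β ∧ πb β < πb α then 1
      else if πt β < πt α ∧ πb α < πb β then -1 else 0)
    (hΩ' : ∀ α β, Ω' α β =
      if π't α < π't β ∧ π'b β < π'b α then 1
      else if π't β < π't α ∧ π'b α < π'b β then -1 else 0)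
    -- winner and loser of the top-type arrow
    (αt αb : A)
    (hαt : (πt αt : ℕ) = d - 1) (hαb : (πb αb : ℕ) = d - 1)
    -- π' = R_t(π): top data unchanged, the loser αb is moved just after αt in the bottom
    (hπ't : π't = πt)
    (hπ'b1 : ∀ α, (πb α : ℕ) ≤ (πb αt : ℕ) → π'b α = πb α)
    (hπ'b2 : (π'b αb : ℕ) = (πb αt : ℕ) + 1)
    (hπ'b3 : ∀ α, (πb αt : ℕ) < (πb α : ℕ) → (πb α : ℕ) < d - 1 →
      (π'b α : ℕ) = (πb α : ℕ) + 1)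
    (B : Matrix A A ℝ)
    (hB : B = 1 + Matrix.single αb αt 1) :
    B * Ω * B.transpose = Ω' := by
  have hmove : IsTopRauzyMove πb π'b αt αb := ⟨hαb, hπ'b1, hπ'b2, hπ'b3⟩
  have hαt_max (α : A) : πt α ≤ πt αt := Fin.le_def.2 (hαt ▸ Nat.le_sub_one_of_lt (πt α).isLt)
  have hloser_row {β : A} (hβ : β ≠ αb) :
      rauzyForm πt π'b αb β = rauzyForm πt πb αb β + rauzyForm πt πb αt β :=
    rauzyForm_loser_row πt.injective hαt_max hβ (hmove.lt_loser_of_ne hβ)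
      (hmove.lt_loser_iff hβ) (hmove.loser_lt_iff hβ)
  obtain rfl : Ω = rauzyForm πt πb := Matrix.ext hΩ
  obtain rfl : Ω' = rauzyForm πt π'b := hπ't ▸ Matrix.ext hΩ'
  rw [hB, ← transvection, transpose_transvection]
  ext α β
  obtain rfl | hα := eq_or_ne αb α <;> obtain rfl | hβ := eq_or_ne αb β
  · simp [rauzyForm_apply_self, rauzyForm_apply_swap πt πb αb αt]
  · simp [hβ.symm, hloser_row hβ.symm]
  · have hcol := hloser_row hα.symm
    rw [rauzyForm_apply_swap πt π'b α, rauzyForm_apply_swap πt πb α,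
      rauzyForm_apply_swap πt πb α] at hcol
    simp only [mul_transvection_apply_same, transvection_mul_apply_of_ne _ _ _ _ hα.symm]
    linarith
  · simp only [mul_transvection_apply_of_ne _ _ _ _ hβ.symm,
      transvection_mul_apply_of_ne _ _ _ _ hα.symm]
    exact (rauzyForm_apply_congr Iff.rfl Iff.rfl (hmove.lt_iff_of_ne hα.symm hβ.symm)
      (hmove.lt_iff_of_ne hβ.symm hα.symm)).symm

/-- For a top-type Rauzy arrow `γ : π → π'` with winner `αt` and loser `αb`,
the elementary matrix `B_γ = I + E_{αb αt}` conjugates the antisymmetric matrix `Ω_π`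
to `Ω_{π'}`: `B_γ Ω_π (B_γ)ᵀ = Ω_{π'}`.  Positions are 0-indexed (`Fin d`), so the paper's
position `k ∈ {1,…,d}` corresponds to the value `k-1` of the equivalence. -/
theorem stmt_0 {A : Type*} [Fintype A] [DecidableEq A]
    (d : ℕ) (hd : 2 ≤ d)
    (πt πb π't π'b : A ≃ Fin d)
    (Ω Ω' : Matrix A A ℝ)
    (hΩ : ∀ α β, Ω α β =
      if πt α < πt β ∧ πb β < πb α then 1
      else if πt β < πt α ∧ πb α < πb β then -1 else 0)
    (hΩ' : ∀ α β, Ω' α β =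
      if π't α < π't β ∧ π'b β < π'b α then 1
      else if π't β < π't α ∧ π'b α < π'b β then -1 else 0)
    -- irreducibility of π
    (hirr : ∀ k : ℕ, 1 ≤ k → k < d →
      {α | ((πt α : ℕ)) < k} ≠ {α | ((πb α : ℕ)) < k})
    -- winner and loser of the top-type arrow
    (αt αb : A)
    (hαt : (πt αt : ℕ) = d - 1) (hαb : (πb αb : ℕ) = d - 1)
    -- π' = R_t(π): top data unchanged, the loser αb is moved just after αt in the bottom
    (hπ't : π't = πt)
    (hπ'b1 : ∀ α, (πb α : ℕ) ≤ (πb αt : ℕ) → π'b α = πb α)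
    (hπ'b2 : (π'b αb : ℕ) = (πb αt : ℕ) + 1)
    (hπ'b3 : ∀ α, (πb αt : ℕ) < (πb α : ℕ) → (πb α : ℕ) < d - 1 →
      (π'b α : ℕ) = (πb α : ℕ) + 1)
    (B : Matrix A A ℝ)
    (hB : B = 1 + Matrix.single αb αt 1) :
    B * Ω * B.transpose = Ω' :=
  stmt_0_general d πt πb π't π'b Ω Ω' hΩ hΩ' αt αb hαt hαb hπ't hπ'b1 hπ'b2 hπ'b3 B hB
end

section
/- Let π ∈ R be irreducible combinatorial data, Ω_π its antisymmetric matrix, H(π) = Im(Ω_π) ⊂ R^A, and C the open positive cone of R^A. If π is standard, i.e. there exist letters α_t, α_b with π_t(α_t) = π_b(α_b) = d and π_t(α_b) = π_b(α_t) = 1, then the intersection C(π) = C ∩ H(π) is nonempty. In particular the vector x ∈ R^A given by x_α = 2 for α ∉ {α_t, α_b} and x_{α_t} = x_{α_b} = 1 lies in C(π). -/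
/-- For standard irreducible combinatorial data π, the cone
`C(π) = C ∩ H(π)` (positive open cone intersected with the image of Ω_π) is nonempty;
in fact the vector with coordinates 2 everywhere except 1 at the letters `αt, αb`
lies in it.  Positions are 0-indexed, so "position d" is `d-1` and "position 1" is `0`. -/
theorem stmt_1 {A : Type*} [Fintype A] [DecidableEq A]
    (d : ℕ) (hd : 2 ≤ d)
    (πt πb : A ≃ Fin d)
    (Ω : Matrix A A ℝ)
    (hΩ : ∀ α β, Ω α β =
      if πt α < πt β ∧ πb β < πb α then 1
      else if πt β < πt α ∧ πb α < πb β then -1 else 0)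
    (hirr : ∀ k : ℕ, 1 ≤ k → k < d →
      {α | ((πt α : ℕ)) < k} ≠ {α | ((πb α : ℕ)) < k})
    (αt αb : A)
    (hstd : (πt αt : ℕ) = d - 1 ∧ (πb αb : ℕ) = d - 1 ∧
      (πt αb : ℕ) = 0 ∧ (πb αt : ℕ) = 0) :
    (fun α => if α = αt ∨ α = αb then (1 : ℝ) else 2) ∈
      ({x : A → ℝ | ∀ α, 0 < x α} ∩ ↑(LinearMap.range Ω.mulVecLin)) ∧
    ({x : A → ℝ | ∀ α, 0 < x α} ∩ ↑(LinearMap.range Ω.mulVecLin)).Nonempty := by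

  obtain ⟨h1, h2, h3, h4⟩ := hstd
  have hne : αt ≠ αb := by
    intro h; rw [h, h3] at h1; omega
  have ht : ∀ α, α ≠ αt → (πt α : ℕ) < d - 1 := by
    intro α hα
    have hlt := (πt α).isLt
    rcases Nat.lt_or_ge (πt α : ℕ) (d - 1) with h | h
    · exact h
    · exact absurd (πt.injective (Fin.ext (by omega))) hα
  have hb : ∀ α, α ≠ αt → 0 < (πb α : ℕ) := by
    intro α hα
    rcases Nat.eq_zero_or_pos (πb α : ℕ) with h | h
    · exact absurd (πb.injective (Fin.ext (by omega))) hα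
    · exact h
  have ht' : ∀ α, α ≠ αb → 0 < (πt α : ℕ) := by
    intro α hα
    rcases Nat.eq_zero_or_pos (πt α : ℕ) with h | h
    · exact absurd (πt.injective (Fin.ext (by omega))) hα
    · exact h
  have hb' : ∀ α, α ≠ αb → (πb α : ℕ) < d - 1 := by
    intro α hα
    have hlt := (πb α).isLt
    rcases Nat.lt_or_ge (πb α : ℕ) (d - 1) with h | h
    · exact h
    · exact absurd (πb.injective (Fin.ext (by omega))) hα
  have hcolT : ∀ α, Ω α αt = if α = αt then 0 else 1 := by
    intro α
    rw [hΩ]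
    by_cases hα : α = αt
    · subst hα; simp
    · rw [if_neg hα, if_pos]
      exact ⟨Fin.lt_def.2 (by have := ht α hα; omega),
             Fin.lt_def.2 (by have := hb α hα; omega)⟩
  have hcolB : ∀ α, Ω α αb = if α = αb then 0 else -1 := by
    intro α
    rw [hΩ]
    by_cases hα : α = αb
    · subst hα; simp
    · rw [if_neg hα, if_neg, if_pos]
      · exact ⟨Fin.lt_def.2 (by have := ht' α hα; omega),
               Fin.lt_def.2 (by have := hb' α hα; omega)⟩
      · rintro ⟨hc, -⟩
        have := ht' α hα
        have := Fin.lt_def.1 hc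
        omega
  have hmem : (fun α => if α = αt ∨ α = αb then (1 : ℝ) else 2) ∈
      ({x : A → ℝ | ∀ α, 0 < x α} ∩ ↑(LinearMap.range Ω.mulVecLin)) := by
    constructor
    · intro α
      by_cases h : α = αt ∨ α = αb <;> simp [h]
    · refine ⟨(fun β => if β = αt then 1 else if β = αb then -1 else 0), ?_⟩
      funext α
      have hsum : Matrix.mulVecLin Ω (fun β => if β = αt then 1 else if β = αb then -1 else 0) α
          = ∑ β, Ω α β * (if β = αt then (1:ℝ) else if β = αb then -1 else 0) := rfl
      rw [hsum]
      have : ∀ β, Ω α β * (if β = αt then (1:ℝ) else if β = αb then -1 else 0)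
          = (if β = αt then Ω α αt else 0) + (if β = αb then -Ω α αb else 0) := by
        intro β
        by_cases hβt : β = αt
        · subst hβt; simp [hne]
        · by_cases hβb : β = αb
          · subst hβb; simp [hβt]
          · simp [hβt, hβb]
      rw [Finset.sum_congr rfl fun β _ => this β, Finset.sum_add_distrib,
        Finset.sum_ite_eq' Finset.univ αt (fun _ => Ω α αt),
        Finset.sum_ite_eq' Finset.univ αb (fun _ => -Ω α αb)]
      simp only [Finset.mem_univ, if_true]
      rw [hcolT, hcolB]
      by_cases hαt : α = αt
      · subst hαt; rw [if_pos rfl, if_neg hne, if_pos (Or.inl rfl)]; ring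
      · by_cases hαb : α = αb
        · subst hαb; rw [if_neg hαt, if_pos rfl, if_pos (Or.inr rfl)]; ring
        · rw [if_neg hαt, if_neg hαb, if_neg (by tauto)]; ring
  exact ⟨hmem, ⟨_, hmem⟩⟩
end

section
/- Fix a finite set of combinatorial data (a Rauzy class R) such that for each π ∈ R the cone C(π) = C ∩ H(π) is nonempty, where H(π) = Im(Ω_π). Then there exists a constant K > 1 such that for any path γ: π → π' in the Rauzy diagram with associated nonnegative matrix B = B_γ satisfying B(H(π)) = H(π') and B(C(π)) ⊆ C(π'), one has ‖B|_{H(π)}‖ ≤ ‖B‖ ≤ K · ‖B|_{H(π)}‖, where ‖B‖ = max_α Σ_β |B_{αβ}| and ‖B|_{H(π)}‖ is the operator norm of the restriction of B to H(π) with respect to the sup norm. -/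
/-- `‖B‖ = max_α Σ_β |B_{αβ}|` (operator norm for the sup norm). -/
noncomputable def rowNorm {A : Type*} [Fintype A] (B : Matrix A A ℝ) : ℝ :=
  ⨆ α, ∑ β, |B α β|

/-- sup norm on `ℝ^A`. -/
noncomputable def supNorm {A : Type*} [Fintype A] (x : A → ℝ) : ℝ :=
  ⨆ α, |x α|

/-- operator norm of the restriction of `B` to the subspace `H` (sup norm). -/
noncomputable def restrNorm {A : Type*} [Fintype A]
    (B : Matrix A A ℝ) (H : Submodule ℝ (A → ℝ)) : ℝ :=
  sSup ((fun x => supNorm (B.mulVec x)) '' {x : A → ℝ | x ∈ H ∧ supNorm x ≤ 1})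

lemma abs_le_supNorm {A : Type*} [Fintype A] (x : A → ℝ) (α : A) : |x α| ≤ supNorm x := by
  unfold supNorm
  exact le_ciSup (f := fun α => |x α|) (Set.Finite.bddAbove (Set.finite_range _)) α

lemma supNorm_le {A : Type*} [Fintype A] [Nonempty A] {x : A → ℝ} {a : ℝ}
    (h : ∀ α, |x α| ≤ a) : supNorm x ≤ a := by
  unfold supNorm
  exact ciSup_le h

lemma supNorm_nonneg {A : Type*} [Fintype A] [Nonempty A] (x : A → ℝ) : 0 ≤ supNorm x :=
  le_trans (abs_nonneg _) (abs_le_supNorm x (Classical.arbitrary A))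

lemma rowsum_le_rowNorm {A : Type*} [Fintype A] (B : Matrix A A ℝ) (α : A) :
    ∑ β, |B α β| ≤ rowNorm B := by
  unfold rowNorm
  exact le_ciSup (f := fun α => ∑ β, |B α β|) (Set.Finite.bddAbove (Set.finite_range _)) α

/-- given finitely many subspaces `H i` (the spaces `H(π)`, π in a Rauzy
class), each meeting the open positive cone, there is a uniform constant `K > 1` such
that every nonnegative cocycle matrix `B` mapping `H i` onto `H j` and the cone
`C(i) = C ∩ H i` into `C(j)` satisfies `‖B|_{H i}‖ ≤ ‖B‖ ≤ K ‖B|_{H i}‖`. -/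
theorem stmt_2 {A : Type*} [Fintype A] [DecidableEq A] [Nonempty A]
    {ι : Type*} [Fintype ι]
    (H : ι → Submodule ℝ (A → ℝ))
    (hcone : ∀ i, ∃ v, v ∈ H i ∧ ∀ α, 0 < v α) :
    ∃ K : ℝ, 1 < K ∧ ∀ (i j : ι) (B : Matrix A A ℝ),
      (∀ α β, 0 ≤ B α β) →
      Submodule.map B.mulVecLin (H i) = H j →
      (∀ x, x ∈ H i → (∀ α, 0 < x α) → ∀ α, 0 < B.mulVec x α) →
      restrNorm B (H i) ≤ rowNorm B ∧ rowNorm B ≤ K * restrNorm B (H i) := by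
  classical
  choose v hvH hvpos using hcone
  set m : ι → ℝ := fun i => supNorm (v i) with hm
  set c : ι → ℝ := fun i => Finset.univ.inf' Finset.univ_nonempty (v i) with hc
  have hc_le : ∀ i α, c i ≤ v i α := fun i α => Finset.inf'_le _ (Finset.mem_univ α)
  have hc_pos : ∀ i, 0 < c i := by
    intro i
    rw [hc]
    rw [Finset.lt_inf'_iff]
    exact fun α _ => hvpos i α
  have hv_le_m : ∀ i α, v i α ≤ m i := fun i α =>
    le_trans (le_abs_self _) (abs_le_supNorm (v i) α)
  have hm_pos : ∀ i, 0 < m i := fun i =>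
    lt_of_lt_of_le (hvpos i (Classical.arbitrary A)) (hv_le_m i _)
  refine ⟨2 + ∑ i, m i / c i, ?_, ?_⟩
  · have : (0:ℝ) ≤ ∑ i, m i / c i :=
      Finset.sum_nonneg fun i _ => div_nonneg (le_of_lt (hm_pos i)) (le_of_lt (hc_pos i))
    linarith
  intro i j B hB _ _
  have hK_ge : m i / c i ≤ 2 + ∑ k, m k / c k := by
    have h1 : m i / c i ≤ ∑ k, m k / c k :=
      Finset.single_le_sum (f := fun k => m k / c k)
        (fun k _ => div_nonneg (le_of_lt (hm_pos k)) (le_of_lt (hc_pos k)))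
        (Finset.mem_univ i)
    linarith
  -- key bound: image elements bounded by rowNorm
  have key : ∀ x : A → ℝ, supNorm x ≤ 1 → supNorm (B.mulVec x) ≤ rowNorm B := by
    intro x hx
    apply supNorm_le
    intro α
    calc |B.mulVec x α| ≤ ∑ β, |B α β * x β| := by
          rw [Matrix.mulVec, dotProduct]
          exact Finset.abs_sum_le_sum_abs _ _
      _ ≤ ∑ β, |B α β| := by
          apply Finset.sum_le_sum
          intro β _
          rw [abs_mul]
          calc |B α β| * |x β| ≤ |B α β| * 1 :=
                mul_le_mul_of_nonneg_left (le_trans (abs_le_supNorm x β) hx) (abs_nonneg _)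
            _ = |B α β| := mul_one _
      _ ≤ rowNorm B := rowsum_le_rowNorm B α
  have hrow_nonneg : 0 ≤ rowNorm B :=
    le_trans (Finset.sum_nonneg fun β _ => abs_nonneg _)
      (rowsum_le_rowNorm B (Classical.arbitrary A))
  have hbdd : BddAbove ((fun x => supNorm (B.mulVec x)) '' {x : A → ℝ | x ∈ H i ∧ supNorm x ≤ 1}) := by
    refine ⟨rowNorm B, ?_⟩
    rintro y ⟨x, ⟨_, hx⟩, rfl⟩
    exact key x hx
  constructor
  · apply Real.sSup_le _ hrow_nonneg
    rintro y ⟨x, ⟨_, hx⟩, rfl⟩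
    exact key x hx
  · -- use test vector x = (m i)⁻¹ • v i
    set x : A → ℝ := (m i)⁻¹ • v i with hxdef
    have hxH : x ∈ H i := Submodule.smul_mem _ _ (hvH i)
    have hx1 : supNorm x ≤ 1 := by
      apply supNorm_le
      intro α
      have h0 : 0 ≤ x α := by
        simp only [hxdef, Pi.smul_apply, smul_eq_mul]
        exact mul_nonneg (inv_nonneg.mpr (le_of_lt (hm_pos i))) (le_of_lt (hvpos i α))
      rw [abs_of_nonneg h0]
      simp only [hxdef, Pi.smul_apply, smul_eq_mul]
      rw [inv_mul_le_iff₀ (hm_pos i), mul_one]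
      exact hv_le_m i α
    have hmem : supNorm (B.mulVec x) ∈
        (fun x => supNorm (B.mulVec x)) '' {x : A → ℝ | x ∈ H i ∧ supNorm x ≤ 1} :=
      ⟨x, ⟨hxH, hx1⟩, rfl⟩
    have hle : supNorm (B.mulVec x) ≤ restrNorm B (H i) := le_csSup hbdd hmem
    have hstep : rowNorm B ≤ (m i / c i) * supNorm (B.mulVec x) := by
      unfold rowNorm
      apply ciSup_le
      intro α
      have hBx : B.mulVec x α = (m i)⁻¹ * ∑ β, B α β * v i β := by
        simp only [Matrix.mulVec, dotProduct, hxdef, Pi.smul_apply, smul_eq_mul,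
          Finset.mul_sum]
        exact Finset.sum_congr rfl fun β _ => by ring
      have h1 : ∑ β, |B α β| = ∑ β, B α β :=
        Finset.sum_congr rfl fun β _ => abs_of_nonneg (hB α β)
      have h2 : (c i) * ∑ β, B α β ≤ ∑ β, B α β * v i β := by
        rw [Finset.mul_sum]
        apply Finset.sum_le_sum
        intro β _
        rw [mul_comm (c i)]
        exact mul_le_mul_of_nonneg_left (hc_le i β) (hB α β)
      have h3 : ∑ β, B α β ≤ (m i / c i) * B.mulVec x α := by
        rw [hBx, div_mul_eq_mul_div, le_div_iff₀ (hc_pos i)]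
        rw [mul_comm (∑ β, B α β) (c i)]
        calc c i * ∑ β, B α β ≤ ∑ β, B α β * v i β := h2
          _ = m i * ((m i)⁻¹ * ∑ β, B α β * v i β) := by
              rw [← mul_assoc, mul_inv_cancel₀ (ne_of_gt (hm_pos i)), one_mul]
        
      calc ∑ β, |B α β| = ∑ β, B α β := h1
        _ ≤ (m i / c i) * B.mulVec x α := h3
        _ ≤ (m i / c i) * |B.mulVec x α| :=
            mul_le_mul_of_nonneg_left (le_abs_self _)
              (div_nonneg (le_of_lt (hm_pos i)) (le_of_lt (hc_pos i)))
        _ ≤ (m i / c i) * supNorm (B.mulVec x) :=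
            mul_le_mul_of_nonneg_left (abs_le_supNorm _ α)
              (div_nonneg (le_of_lt (hm_pos i)) (le_of_lt (hc_pos i)))
    calc rowNorm B ≤ (m i / c i) * supNorm (B.mulVec x) := hstep
      _ ≤ (2 + ∑ k, m k / c k) * restrNorm B (H i) := by
          apply mul_le_mul hK_ge hle (supNorm_nonneg _)
          have : (0:ℝ) ≤ ∑ k, m k / c k :=
            Finset.sum_nonneg fun k _ => div_nonneg (le_of_lt (hm_pos k)) (le_of_lt (hc_pos k))
          linarith
end

section
/- Suppose an infinite Rauzy–Veech path γ satisfies the Roth-type matrix growth condition (a): for all τ > 0 there exists C_τ > 0 such that ‖B(ñ_{k−1}, ñ_k)‖ ≤ C_τ ‖B(0, ñ_{k−1})‖^τ for all k > 0, where (ñ_k) is the sequence of positivity times (ñ_0 = 0 and ñ_k is the smallest n > ñ_{k−1} such that B(ñ_{k−1}, n) has all entries positive). Let (n_k) be the sequence of absolute-cone times (n_0 = 0 and n_k the smallest n > n_{k−1} such that the closure of B(n_{k−1}, n)(C(π^{(n_{k−1})})) is contained in C(π^{(n)}) ∪ {0}). Then γ also satisfies condition (a'): for all τ > 0 there exists C'_τ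 > 0 such that ‖B(n_{k−1}, n_k)‖ ≤ C'_τ ‖B(0, n_{k−1})‖^τ for all k > 0. The key interleaving facts used are: if B(m,n) has positive coefficients then the closure of B(m,n)(C(π^{(m)})) ⊂ C(π^{(n)}) ∪ {0}; hence for each k, letting j be minimal with ñ_j ≥ n_k, one has ñ_{j−1} < n_k ≤ ñ_j and n_{k+1} ≤ ñ_{j+1}. -/
section aux
variable {A : Type*} [Fintype A] [Nonempty A]

lemma rowSum_le_rowNorm (B : Matrix A A ℝ) (α : A) : ∑ β, |B α β| ≤ rowNorm B := by
  unfold rowNorm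
  exact le_ciSup (f := fun α : A => ∑ β, |B α β|) (Set.Finite.bddAbove (Set.finite_range _)) α

lemma rowNorm_le' {B : Matrix A A ℝ} {c : ℝ} (h : ∀ α, ∑ β, |B α β| ≤ c) :
    rowNorm B ≤ c := by unfold rowNorm; exact ciSup_le h

lemma rowNorm_nonneg (B : Matrix A A ℝ) : 0 ≤ rowNorm B :=
  le_trans (Finset.sum_nonneg fun _ _ => abs_nonneg _)
    (rowSum_le_rowNorm B (Classical.arbitrary A))

lemma rowNorm_mul_le (P Q : Matrix A A ℝ) :
    rowNorm (P * Q) ≤ rowNorm P * rowNorm Q := by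
  apply rowNorm_le'
  intro α
  calc ∑ β, |(P * Q) α β| ≤ ∑ β, ∑ γ, |P α γ| * |Q γ β| := by
        refine Finset.sum_le_sum fun β _ => ?_
        rw [Matrix.mul_apply]
        exact (Finset.abs_sum_le_sum_abs _ _).trans (le_of_eq (by simp [abs_mul]))
    _ = ∑ γ, |P α γ| * ∑ β, |Q γ β| := by
        rw [Finset.sum_comm]; simp [Finset.mul_sum]
    _ ≤ ∑ γ, |P α γ| * rowNorm Q :=
        Finset.sum_le_sum fun γ _ =>
          mul_le_mul_of_nonneg_left (rowSum_le_rowNorm Q γ) (abs_nonneg _)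
    _ = (∑ γ, |P α γ|) * rowNorm Q := (Finset.sum_mul _ _ _).symm
    _ ≤ rowNorm P * rowNorm Q :=
        mul_le_mul_of_nonneg_right (rowSum_le_rowNorm P α) (rowNorm_nonneg Q)

lemma rowNorm_mono {P Q : Matrix A A ℝ} (h0 : ∀ α β, 0 ≤ P α β)
    (h : ∀ α β, P α β ≤ Q α β) : rowNorm P ≤ rowNorm Q := by
  apply rowNorm_le'
  intro α
  refine le_trans (Finset.sum_le_sum fun β _ => ?_) (rowSum_le_rowNorm Q α)
  rw [abs_of_nonneg (h0 α β)]
  exact (h α β).trans (le_abs_self _)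

end aux

/-- the Roth-type matrix growth condition (a), along the positivity
times (ñ_k), implies condition (a') along the absolute-cone times (n_k).  Here
`Cn n` is the cone `C(π^{(n)}) = C ∩ H(π^{(n)})`, positivity of `B(m,n)` forces the
closure-cone inclusion, and the two time sequences are characterized by minimality. -/
theorem stmt_6 {A : Type*} [Fintype A] [DecidableEq A] [Nonempty A]
    (Bc : ℕ → ℕ → Matrix A A ℝ)
    (hnonneg : ∀ m n α β, 0 ≤ Bc m n α β)
    (hid : ∀ n, Bc n n = 1)
    (hcoc : ∀ p m n, p ≤ m → m ≤ n → Bc p n = Bc m n * Bc p m)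
    (hmono : ∀ m n n' α β, m ≤ n → n ≤ n' → Bc m n α β ≤ Bc m n' α β)
    (Cn : ℕ → Set (A → ℝ))
    (hmap : ∀ m n, m ≤ n → (Bc m n).mulVec '' Cn m ⊆ Cn n)
    -- positivity of all entries of B(m,n) forces the closure-cone inclusion
    (hposmap : ∀ m n, m ≤ n → (∀ α β, 0 < Bc m n α β) →
      closure ((Bc m n).mulVec '' Cn m) ⊆ Cn n ∪ {0})
    -- the positivity times ñ_k
    (tn : ℕ → ℕ) (htn0 : tn 0 = 0) (htnmono : StrictMono tn)
    (htnpos : ∀ k, 1 ≤ k → ∀ α β, 0 < Bc (tn (k - 1)) (tn k) α β)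
    (htnmin : ∀ k, 1 ≤ k → ∀ n, tn (k - 1) < n → n < tn k →
      ¬ (∀ α β, 0 < Bc (tn (k - 1)) n α β))
    -- the absolute-cone times n_k
    (nk : ℕ → ℕ) (hnk0 : nk 0 = 0) (hnkmono : StrictMono nk)
    (hnkcone : ∀ k, 1 ≤ k →
      closure ((Bc (nk (k - 1)) (nk k)).mulVec '' Cn (nk (k - 1)))
        ⊆ Cn (nk k) ∪ {0})
    (hnkmin : ∀ k, 1 ≤ k → ∀ n, nk (k - 1) < n → n < nk k →
      ¬ (closure ((Bc (nk (k - 1)) n).mulVec '' Cn (nk (k - 1))) ⊆ Cn n ∪ {0}))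
    -- condition (a) along (ñ_k)
    (ha : ∀ τ : ℝ, 0 < τ → ∃ C : ℝ, 0 < C ∧ ∀ k, 1 ≤ k →
      rowNorm (Bc (tn (k - 1)) (tn k)) ≤ C * rowNorm (Bc 0 (tn (k - 1))) ^ τ) :
    -- condition (a') along (n_k)
    ∀ τ : ℝ, 0 < τ → ∃ C' : ℝ, 0 < C' ∧ ∀ k, 1 ≤ k →
      rowNorm (Bc (nk (k - 1)) (nk k)) ≤ C' * rowNorm (Bc 0 (nk (k - 1))) ^ τ := by
  -- basic matrix facts
  have diag1 : ∀ m n β, m ≤ n → 1 ≤ Bc m n β β := by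
    intro m n β h
    have := hmono m m n β β le_rfl h
    simpa [hid] using this
  have entry_mono_left : ∀ m' m n α β, m' ≤ m → m ≤ n → Bc m n α β ≤ Bc m' n α β := by
    intro m' m n α β h1 h2
    rw [hcoc m' m n h1 h2, Matrix.mul_apply]
    calc Bc m n α β = Bc m n α β * 1 := (mul_one _).symm
      _ ≤ Bc m n α β * Bc m' m β β :=
          mul_le_mul_of_nonneg_left (diag1 m' m β h1) (hnonneg _ _ _ _)
      _ ≤ ∑ γ, Bc m n α γ * Bc m' m γ β :=
          Finset.single_le_sum (f := fun γ => Bc m n α γ * Bc m' m γ β)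
            (fun γ _ => mul_nonneg (hnonneg _ _ _ _) (hnonneg _ _ _ _))
            (Finset.mem_univ β)
  have norm_mono : ∀ m' m n n', m' ≤ m → m ≤ n → n ≤ n' →
      rowNorm (Bc m n) ≤ rowNorm (Bc m' n') := by
    intro m' m n n' h1 h2 h3
    refine rowNorm_mono (fun α β => hnonneg _ _ _ _) (fun α β => ?_)
    exact (hmono m n n' α β h2 h3).trans (entry_mono_left m' m n' α β h1 (h2.trans h3))
  have one_le_norm : ∀ m n, m ≤ n → 1 ≤ rowNorm (Bc m n) := by
    intro m n h
    obtain ⟨α⟩ := ‹Nonempty A›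
    refine le_trans ?_ (rowSum_le_rowNorm (Bc m n) α)
    calc (1 : ℝ) ≤ Bc m n α α := diag1 m n α h
      _ = |Bc m n α α| := (abs_of_nonneg (hnonneg _ _ _ _)).symm
      _ ≤ ∑ β, |Bc m n α β| :=
          Finset.single_le_sum (f := fun β => |Bc m n α β|)
            (fun β _ => abs_nonneg _) (Finset.mem_univ α)
  -- main argument
  intro τ hτ
  set τ' : ℝ := min (τ / 3) 1 with hτ'def
  have hτ'pos : 0 < τ' := lt_min (by positivity) one_pos
  have hτ'1 : τ' ≤ 1 := min_le_right _ _
  have hτ'3 : τ' ≤ τ / 3 := min_le_left _ _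
  obtain ⟨C, hCpos, hCa⟩ := ha τ' hτ'pos
  set D : ℝ := max C 1 with hDdef
  have hD1 : (1 : ℝ) ≤ D := le_max_right _ _
  have hD0 : (0 : ℝ) ≤ D := by linarith
  refine ⟨D ^ (3 : ℕ), by positivity, ?_⟩
  intro k hk
  set m : ℕ := nk (k - 1) with hmdef
  -- find the interleaving index j with tn j ≤ m ≤ tn (j+1)
  have hex : ∃ i, m ≤ tn (i + 1) :=
    ⟨m, le_trans htnmono.le_apply (htnmono.monotone (Nat.le_succ m))⟩
  set j : ℕ := Nat.find hex with hjdef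
  have hj2 : m ≤ tn (j + 1) := Nat.find_spec hex
  have hj1 : tn j ≤ m := by
    rcases Nat.eq_zero_or_pos j with h0 | h0
    · rw [h0, htn0]; exact Nat.zero_le m
    · have hmin := Nat.find_min hex (show j - 1 < j from Nat.sub_lt h0 one_pos)
      have h' : tn (j - 1 + 1) < m := not_le.mp hmin
      rw [show j - 1 + 1 = j from by omega] at h'
      exact h'.le
  have htj12 : tn (j + 1) < tn (j + 2) := htnmono (by omega)
  have hmk : m < nk k := by
    have := hnkmono (show k - 1 < k by omega)
    exact this
  -- positivity of Bc m (tn (j+2))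
  have hpos2 : ∀ α β, 0 < Bc m (tn (j + 2)) α β := by
    intro α β
    have hp := htnpos (j + 2) (by omega) α β
    have : tn (j + 2 - 1) = tn (j + 1) := by norm_num
    rw [this] at hp
    exact lt_of_lt_of_le hp
      (entry_mono_left m (tn (j + 1)) (tn (j + 2)) α β hj2 htj12.le)
  have hsub := hposmap m (tn (j + 2)) (hj2.trans htj12.le) hpos2
  -- hence nk k ≤ tn (j+2)
  have hle : nk k ≤ tn (j + 2) := by
    by_contra h
    push_neg at h
    exact hnkmin k hk (tn (j + 2)) (lt_of_le_of_lt hj2 htj12) h hsub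
  -- norms
  set N : ℝ := rowNorm (Bc 0 m) with hNdef
  set a : ℝ := rowNorm (Bc 0 (tn j)) with hadef
  set b : ℝ := rowNorm (Bc 0 (tn (j + 1))) with hbdef
  set P1 : ℝ := rowNorm (Bc (tn j) (tn (j + 1))) with hP1def
  set P2 : ℝ := rowNorm (Bc (tn (j + 1)) (tn (j + 2))) with hP2def
  have hN1 : (1 : ℝ) ≤ N := one_le_norm 0 m (Nat.zero_le _)
  have hN0 : (0 : ℝ) < N := by linarith
  have ha1 : (1 : ℝ) ≤ a := one_le_norm 0 (tn j) (Nat.zero_le _)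
  have haN : a ≤ N := norm_mono 0 0 (tn j) m le_rfl (Nat.zero_le _) hj1
  have hP1nn : 0 ≤ P1 := rowNorm_nonneg _
  have hP2nn : 0 ≤ P2 := rowNorm_nonneg _
  have hb0 : 0 ≤ b := rowNorm_nonneg _
  -- condition (a) at indices j+1 and j+2
  have hP1a : P1 ≤ D * a ^ τ' := by
    have h := hCa (j + 1) (by omega)
    have e : (j + 1 - 1) = j := by norm_num
    rw [e] at h
    refine h.trans (mul_le_mul_of_nonneg_right (le_max_left _ _) ?_)
    positivity
  have hP2b : P2 ≤ D * b ^ τ' := by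
    have h := hCa (j + 2) (by omega)
    have e : (j + 2 - 1) = j + 1 := by norm_num
    rw [e] at h
    refine h.trans (mul_le_mul_of_nonneg_right (le_max_left _ _) ?_)
    positivity
  -- submultiplicativity facts
  have hba : b ≤ P1 * a := by
    rw [hbdef, hcoc 0 (tn j) (tn (j + 1)) (Nat.zero_le _) (htnmono (by omega)).le]
    exact rowNorm_mul_le _ _
  have hstep : rowNorm (Bc m (nk k)) ≤ P2 * P1 := by
    calc rowNorm (Bc m (nk k)) ≤ rowNorm (Bc (tn j) (tn (j + 2))) :=
          norm_mono (tn j) m (nk k) (tn (j + 2)) hj1 hmk.le hle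
      _ ≤ P2 * P1 := by
          rw [hcoc (tn j) (tn (j + 1)) (tn (j + 2)) (htnmono (by omega)).le htj12.le]
          exact rowNorm_mul_le _ _
  -- chain of real inequalities
  have hb' : b ≤ D * N ^ (τ' + 1) := by
    have h1 : b ≤ (D * a ^ τ') * a :=
      hba.trans (mul_le_mul_of_nonneg_right hP1a (by linarith))
    have h2 : a ^ τ' ≤ N ^ τ' := Real.rpow_le_rpow (by linarith) haN hτ'pos.le
    have h3 : (D * a ^ τ') * a ≤ (D * N ^ τ') * N := by
      have ha0 : (0:ℝ) ≤ a := by linarith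
      have : D * a ^ τ' ≤ D * N ^ τ' := mul_le_mul_of_nonneg_left h2 hD0
      exact mul_le_mul this haN ha0 (by positivity)
    have h4 : (D * N ^ τ') * N = D * N ^ (τ' + 1) := by
      rw [Real.rpow_add_one hN0.ne']
      ring
    linarith [h1.trans h3, h4.le]
  have hP2' : P2 ≤ D * D * N ^ ((τ' + 1) * τ') := by
    have h2 : b ^ τ' ≤ (D * N ^ (τ' + 1)) ^ τ' :=
      Real.rpow_le_rpow hb0 hb' hτ'pos.le
    have h3 : (D * N ^ (τ' + 1)) ^ τ' = D ^ τ' * N ^ ((τ' + 1) * τ') := by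
      rw [Real.mul_rpow hD0 (by positivity), ← Real.rpow_mul hN0.le]
    have h4 : D ^ τ' ≤ D := by
      have := Real.rpow_le_rpow_of_exponent_le hD1 hτ'1
      rwa [Real.rpow_one] at this
    calc P2 ≤ D * b ^ τ' := hP2b
      _ ≤ D * (D ^ τ' * N ^ ((τ' + 1) * τ')) := by
          rw [← h3]; exact mul_le_mul_of_nonneg_left h2 hD0
      _ ≤ D * (D * N ^ ((τ' + 1) * τ')) := by
          refine mul_le_mul_of_nonneg_left ?_ hD0
          exact mul_le_mul_of_nonneg_right h4 (by positivity)
      _ = D * D * N ^ ((τ' + 1) * τ') := by ring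
  have hP1' : P1 ≤ D * N ^ τ' :=
    hP1a.trans (mul_le_mul_of_nonneg_left
      (Real.rpow_le_rpow (by linarith) haN hτ'pos.le) hD0)
  have hfin : P2 * P1 ≤ D ^ (3 : ℕ) * N ^ τ := by
    have h1 : P2 * P1 ≤ (D * D * N ^ ((τ' + 1) * τ')) * (D * N ^ τ') :=
      mul_le_mul hP2' hP1' hP1nn (by positivity)
    have h2 : (D * D * N ^ ((τ' + 1) * τ')) * (D * N ^ τ')
        = D ^ (3 : ℕ) * N ^ ((τ' + 1) * τ' + τ') := by
      rw [Real.rpow_add hN0]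
      ring
    have h3 : N ^ ((τ' + 1) * τ' + τ') ≤ N ^ τ := by
      apply Real.rpow_le_rpow_of_exponent_le hN1
      nlinarith
    calc P2 * P1 ≤ D ^ (3 : ℕ) * N ^ ((τ' + 1) * τ' + τ') := by rw [← h2]; exact h1
      _ ≤ D ^ (3 : ℕ) * N ^ τ := mul_le_mul_of_nonneg_left h3 (by positivity)
  exact hstep.trans hfin
end

section
/- Let (π,τ) be of weak dual Roth type with accelerated backward sequence (n̂_k)_{k≤0} (n̂_0 = 0, and each path γ(n̂_{k−1}, n̂_k) is complete), and suppose every complete-path matrix product over 2d−3 consecutive accelerated blocks has all entries ≥ 1. Then for every ε > 0 there exists C' = C'(ε) > 0 such that for all m ≤ 0 and all α, β ∈ A: max(1, B(m,0)_{αβ}) ≥ C' ‖B(m,0)‖^{1−ε}, where B(m,0) is the backward Rauzy–Veech cocycle matrix and ‖B‖ = Σ_{α,β} |B_{αβ}|. -/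
/-!
Write `t j = n̂_{-j}`, `N = 2d - 3`, pick `k` with `t (k + 1) < m ≤ t k` and put `x = ‖B(t k, 0)‖`.
For a target exponent `η`, condition (a) with `ε = η / (N + 1)` bounds every block
`B(t (i + 1), t i)` with `i ≤ k` by `C x^ε`. Hence `‖B(m, 0)‖ ≤ C x^(1+ε)`, and
`Q = B(t k, t (k - N))` has norm at most `‖1‖ (C x^ε)^N`.
If `k ≥ 2N`, then `B(t k, 0) = S T Q` with `S = B(t N, 0)`; `S` and `Q` are complete products,
whose entries are `≥ 1`, so every entry of `S T Q` dominates `‖T‖`. Thus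
`x ≤ ‖S‖ ‖T‖ ‖Q‖ ≤ const · x^(Nε) · B(m, 0)_{αβ}`, which together with the upper bound gives
`‖B(m, 0)‖^(1 - η) ≤ const · B(m, 0)_{αβ}`.
If `k < 2N`, then `‖B(m, 0)‖ ≤ ‖B(t (2N), 0)‖` is bounded and the `max 1` absorbs it.
-/

/-- `‖B‖ = Σ_{α,β} |B_{αβ}|` (the norm used for the dual Roth condition). -/
noncomputable def sumNorm {A : Type*} [Fintype A] (B : Matrix A A ℝ) : ℝ :=
  ∑ α, ∑ β, |B α β|

open Finset

section SumNorm

variable {A : Type*} [Fintype A]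

lemma sumNorm_nonneg (B : Matrix A A ℝ) : 0 ≤ sumNorm B := by
  unfold sumNorm
  positivity

lemma sum_abs_apply_le_sumNorm (B : Matrix A A ℝ) (α : A) : ∑ β, |B α β| ≤ sumNorm B :=
  single_le_sum (f := fun α => ∑ β, |B α β|) (fun _ _ => by positivity) (mem_univ α)

lemma abs_apply_le_sumNorm (B : Matrix A A ℝ) (α β : A) : |B α β| ≤ sumNorm B :=
  (single_le_sum (f := fun β => |B α β|) (fun _ _ => abs_nonneg _) (mem_univ β)).trans
    (sum_abs_apply_le_sumNorm B α)

lemma sumNorm_le_sumNorm {B C : Matrix A A ℝ} (h : ∀ α β, |B α β| ≤ |C α β|) :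
    sumNorm B ≤ sumNorm C :=
  sum_le_sum fun α _ => sum_le_sum fun β _ => h α β

lemma sumNorm_mul_le (B C : Matrix A A ℝ) : sumNorm (B * C) ≤ sumNorm B * sumNorm C :=
  calc sumNorm (B * C) ≤ ∑ α, ∑ β, ∑ γ, |B α γ| * |C γ β| := by
        refine sum_le_sum fun α _ => sum_le_sum fun β _ => ?_
        simpa only [Matrix.mul_apply, abs_mul] using
          abs_sum_le_sum_abs (fun γ => B α γ * C γ β) univ
    _ = ∑ α, ∑ γ, |B α γ| * ∑ β, |C γ β| := by
        simp only [mul_sum]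
        exact sum_congr rfl fun α _ => sum_comm
    _ ≤ ∑ α, ∑ γ, |B α γ| * sumNorm C := by
        gcongr with α _ γ _
        exact sum_abs_apply_le_sumNorm C γ
    _ = sumNorm B * sumNorm C := by simp only [sumNorm, sum_mul]

lemma sumNorm_le_mul_mul_apply {S T Q : Matrix A A ℝ} (hS : ∀ α β, 1 ≤ S α β)
    (hT : ∀ α β, 0 ≤ T α β) (hQ : ∀ α β, 1 ≤ Q α β) (α β : A) :
    sumNorm T ≤ (S * T * Q) α β := by
  have hST : ∀ δ, ∑ γ, T γ δ ≤ (S * T) α δ := fun δ => by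
    rw [Matrix.mul_apply]
    exact sum_le_sum fun γ _ => le_mul_of_one_le_left (hT γ δ) (hS α γ)
  calc sumNorm T = ∑ δ, ∑ γ, T γ δ := by
        rw [sumNorm, sum_comm]
        simp only [abs_of_nonneg (hT _ _)]
    _ ≤ ∑ δ, (S * T) α δ := sum_le_sum fun δ _ => hST δ
    _ ≤ (S * T * Q) α β := by
        rw [Matrix.mul_apply]
        exact sum_le_sum fun δ _ =>
          le_mul_of_one_le_right ((sum_nonneg fun γ _ => hT γ δ).trans (hST δ)) (hQ δ β)

end SumNorm

lemma StrictAnti.exists_apply_succ_lt_le {t : ℕ → ℤ} (ht : StrictAnti t) {m : ℤ}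
    (hm : m ≤ t 0) : ∃ k, t (k + 1) < m ∧ m ≤ t k := by
  by_contra! h
  have hge : ∀ k, m ≤ t k := fun k => by
    induction k with
    | zero => exact hm
    | succ k ih => exact not_lt.1 fun hlt => (h k hlt).not_ge ih
  have hdrop : ∀ k : ℕ, t k + k ≤ t 0 := fun k => by
    induction k with
    | zero => simp
    | succ k ih => have := ht (show k < k + 1 by omega); push_cast; omega
  have := hge (t 0 - m + 1).toNat
  have := hdrop (t 0 - m + 1).toNat
  omega

lemma rpow_one_sub_le_of_le_mul_rpow {x y p C K ε δ η : ℝ} (hx : 1 ≤ x) (hC : 1 ≤ C) (hy : 0 ≤ y)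
    (hε : 0 ≤ ε) (hδ : 0 ≤ δ) (hη : δ + ε ≤ η) (hη1 : η ≤ 1)
    (hyx : y ≤ C * x ^ (1 + ε)) (hxp : x ≤ K * x ^ δ * p) :
    y ^ (1 - η) ≤ C * K * p := by
  have hx0 : 0 < x := by linarith
  have hlow : x ^ (1 - δ) ≤ K * p := by
    refine le_of_mul_le_mul_right ?_ (Real.rpow_pos_of_pos hx0 δ)
    calc x ^ (1 - δ) * x ^ δ = x := by rw [← Real.rpow_add hx0]; simp
      _ ≤ K * x ^ δ * p := hxp
      _ = K * p * x ^ δ := by ring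
  calc y ^ (1 - η) ≤ (C * x ^ (1 + ε)) ^ (1 - η) := Real.rpow_le_rpow hy hyx (by linarith)
    _ = C ^ (1 - η) * x ^ ((1 + ε) * (1 - η)) := by
        rw [Real.mul_rpow (by linarith) (by positivity), ← Real.rpow_mul hx0.le]
    _ ≤ C * x ^ (1 - δ) := by
        gcongr
        · exact Real.rpow_le_self_of_one_le hC (by linarith)
        · nlinarith
    _ ≤ C * K * p := by rw [mul_assoc]; gcongr

lemma min_inv_mul_le_max {y p K M : ℝ} (hy : 0 ≤ y) (hK : 0 < K) (hM : 0 < M)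
    (h : y ≤ M ∨ y ≤ K * p) : min K⁻¹ M⁻¹ * y ≤ max 1 p := by
  rcases h with h | h
  · calc min K⁻¹ M⁻¹ * y ≤ M⁻¹ * y := mul_le_mul_of_nonneg_right (min_le_right _ _) hy
      _ ≤ 1 := by rw [inv_mul_le_iff₀ hM, mul_one]; exact h
      _ ≤ max 1 p := le_max_left _ _
  · calc min K⁻¹ M⁻¹ * y ≤ K⁻¹ * y := mul_le_mul_of_nonneg_right (min_le_left _ _) hy
      _ ≤ p := by rw [inv_mul_le_iff₀ hK]; exact h
      _ ≤ max 1 p := le_max_right _ _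

structure IsBackwardCocycle {A : Type*} [Fintype A] [DecidableEq A]
    (B : ℤ → ℤ → Matrix A A ℝ) : Prop where
  nonneg : ∀ m n α β, 0 ≤ B m n α β
  self : ∀ n, B n n = 1
  mul : ∀ p m n : ℤ, p ≤ m → m ≤ n → n ≤ 0 → B p n = B m n * B p m
  mono : ∀ m m' : ℤ, m' ≤ m → m ≤ 0 → ∀ α β, B m 0 α β ≤ B m' 0 α β

namespace IsBackwardCocycle

variable {A : Type*} [Fintype A] [DecidableEq A] {B : ℤ → ℤ → Matrix A A ℝ}

lemma sumNorm_le_sumNorm_of_le (hB : IsBackwardCocycle B) {m m' : ℤ} (h : m' ≤ m)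
    (hm : m ≤ 0) : sumNorm (B m 0) ≤ sumNorm (B m' 0) :=
  sumNorm_le_sumNorm fun α β => by
    rw [abs_of_nonneg (hB.nonneg ..), abs_of_nonneg (hB.nonneg ..)]
    exact hB.mono m m' h hm α β

lemma one_le_sumNorm [Nonempty A] (hB : IsBackwardCocycle B) {m : ℤ} (hm : m ≤ 0) :
    1 ≤ sumNorm (B m 0) := by
  obtain ⟨α⟩ := ‹Nonempty A›
  calc (1 : ℝ) = B 0 0 α α := by simp [hB.self]
    _ ≤ B m 0 α α := hB.mono 0 m hm le_rfl α α
    _ ≤ sumNorm (B m 0) := (le_abs_self _).trans (abs_apply_le_sumNorm _ α α)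

variable {t : ℕ → ℤ}

lemma sumNorm_le_of_forall_step_le (hB : IsBackwardCocycle B) (ht : Antitone t) (ht0 : t 0 ≤ 0)
    {c : ℝ} (j n : ℕ) (hc : ∀ i, j ≤ i → i < j + n → sumNorm (B (t (i + 1)) (t i)) ≤ c) :
    sumNorm (B (t (j + n)) (t j)) ≤ sumNorm (1 : Matrix A A ℝ) * c ^ n := by
  induction n with
  | zero => simp [hB.self]
  | succ n ih =>
    have hlast := hc (j + n) (by omega) (by omega)
    have hc0 : 0 ≤ c := (sumNorm_nonneg _).trans hlast
    rw [← add_assoc, pow_succ, ← mul_assoc, hB.mul (t (j + n + 1)) (t (j + n)) (t j)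
      (ht (by omega)) (ht (by omega)) ((ht (by omega)).trans ht0)]
    exact (sumNorm_mul_le _ _).trans <| mul_le_mul (ih fun i hi hi' => hc i hi (by omega)) hlast
      (sumNorm_nonneg _) (mul_nonneg (sumNorm_nonneg _) (pow_nonneg hc0 n))

lemma sumNorm_le_mul_apply (hB : IsBackwardCocycle B) (ht : Antitone t) (ht0 : t 0 = 0)
    {N : ℕ} (hpos : ∀ j α β, 1 ≤ B (t (j + N)) (t j) α β) {k : ℕ} (hk : N ≤ k) (α β : A) :
    sumNorm (B (t (k + N)) 0) ≤
      sumNorm (B (t N) 0) * sumNorm (B (t (k + N)) (t k)) * B (t (k + N)) 0 α β := by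
  have hle : ∀ j, t j ≤ 0 := fun j => ht0 ▸ ht (Nat.zero_le j)
  have hS : ∀ α β, 1 ≤ B (t N) 0 α β := by simpa [ht0] using hpos 0
  have hdecomp : B (t (k + N)) 0 = B (t N) 0 * B (t k) (t N) * B (t (k + N)) (t k) := by
    rw [hB.mul _ (t k) _ (ht (by omega)) (hle k) le_rfl,
      hB.mul (t k) (t N) 0 (ht hk) (hle N) le_rfl]
  rw [hdecomp]
  calc _ ≤ sumNorm (B (t N) 0) * sumNorm (B (t k) (t N)) * sumNorm (B (t (k + N)) (t k)) :=
        (sumNorm_mul_le _ _).trans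
          (mul_le_mul_of_nonneg_right (sumNorm_mul_le _ _) (sumNorm_nonneg _))
    _ ≤ sumNorm (B (t N) 0) * (B (t N) 0 * B (t k) (t N) * B (t (k + N)) (t k)) α β *
          sumNorm (B (t (k + N)) (t k)) :=
        mul_le_mul_of_nonneg_right (mul_le_mul_of_nonneg_left
          (sumNorm_le_mul_mul_apply hS (hB.nonneg _ _) (hpos k) α β) (sumNorm_nonneg _))
          (sumNorm_nonneg _)
    _ = _ := by ring

lemma sumNorm_rpow_le_mul_apply (hB : IsBackwardCocycle B) (ht : Antitone t) (ht0 : t 0 = 0)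
    {N : ℕ} (hpos : ∀ j α β, 1 ≤ B (t (j + N)) (t j) α β) {C ε η : ℝ} (hC : 1 ≤ C) (hε : 0 ≤ ε)
    (hη : (N + 1) * ε ≤ η) (hη1 : η ≤ 1)
    (hroth : ∀ j, sumNorm (B (t (j + 1)) (t j)) ≤ C * sumNorm (B (t j) 0) ^ ε)
    {k : ℕ} {m : ℤ} (hk : N ≤ k) (hm : m ≤ t (k + N)) (hm' : t (k + N + 1) < m) (α β : A) :
    sumNorm (B m 0) ^ (1 - η) ≤
      C * (sumNorm (B (t N) 0) * sumNorm (1 : Matrix A A ℝ) * C ^ N) * B m 0 α β := by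
  have : Nonempty A := ⟨α⟩
  have hle : ∀ j, t j ≤ 0 := fun j => ht0 ▸ ht (Nat.zero_le j)
  set x := sumNorm (B (t (k + N)) 0)
  have hx : 1 ≤ x := hB.one_le_sumNorm (hle _)
  have hstep : ∀ i ≤ k + N, sumNorm (B (t (i + 1)) (t i)) ≤ C * x ^ ε := fun i hi =>
    (hroth i).trans <| mul_le_mul_of_nonneg_left (Real.rpow_le_rpow (sumNorm_nonneg _)
      (hB.sumNorm_le_sumNorm_of_le (ht hi) (hle i)) hε) (by linarith)
  have hupper : sumNorm (B m 0) ≤ C * x ^ (1 + ε) :=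
    calc sumNorm (B m 0) ≤ sumNorm (B (t (k + N + 1)) 0) :=
          hB.sumNorm_le_sumNorm_of_le hm'.le (hm.trans (hle _))
      _ = sumNorm (B (t (k + N)) 0 * B (t (k + N + 1)) (t (k + N))) := by
          rw [← hB.mul _ _ _ (ht (by omega)) (hle _) le_rfl]
      _ ≤ x * (C * x ^ ε) :=
          (sumNorm_mul_le _ _).trans (mul_le_mul_of_nonneg_left (hstep _ le_rfl) (sumNorm_nonneg _))
      _ = C * x ^ (1 + ε) := by rw [Real.rpow_add (by linarith), Real.rpow_one]; ring
  have hblock : sumNorm (B (t (k + N)) (t k)) ≤ sumNorm (1 : Matrix A A ℝ) * C ^ N * x ^ (N * ε) :=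
    (hB.sumNorm_le_of_forall_step_le ht ht0.le k N fun i _ hi => hstep i hi.le).trans_eq <| by
      rw [mul_pow, mul_comm (N : ℝ), Real.rpow_mul_natCast (by linarith), mul_assoc]
  have hlower : x ≤ sumNorm (B (t N) 0) * sumNorm (1 : Matrix A A ℝ) * C ^ N * x ^ (N * ε) *
      B m 0 α β :=
    calc x ≤ sumNorm (B (t N) 0) * sumNorm (B (t (k + N)) (t k)) * B (t (k + N)) 0 α β :=
          hB.sumNorm_le_mul_apply ht ht0 hpos hk α β
      _ ≤ sumNorm (B (t N) 0) * (sumNorm (1 : Matrix A A ℝ) * C ^ N * x ^ (N * ε)) * B m 0 α β :=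
          mul_le_mul (mul_le_mul_of_nonneg_left hblock (sumNorm_nonneg _))
            (hB.mono _ _ hm (hle _) α β) (hB.nonneg _ _ _ _)
            (mul_nonneg (sumNorm_nonneg _) ((sumNorm_nonneg _).trans hblock))
      _ = _ := by ring
  exact rpow_one_sub_le_of_le_mul_rpow hx hC (sumNorm_nonneg _) hε (by positivity)
    (by linarith [show ((N : ℝ) + 1) * ε = N * ε + ε by ring]) hη1 hupper hlower

end IsBackwardCocycle

theorem stmt_10_general {A : Type*} [Fintype A] [DecidableEq A] [Nonempty A]
    (d : ℕ)
    (Bc : ℤ → ℤ → Matrix A A ℝ)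
    (hnonneg : ∀ m n α β, 0 ≤ Bc m n α β)
    (hid : ∀ n, Bc n n = 1)
    (hcoc : ∀ p m n : ℤ, p ≤ m → m ≤ n → n ≤ 0 → Bc p n = Bc m n * Bc p m)
    (hmono : ∀ m m' : ℤ, m' ≤ m → m ≤ 0 → ∀ α β, Bc m 0 α β ≤ Bc m' 0 α β)
    (hatn : ℕ → ℤ) (h0 : hatn 0 = 0) (hdec : StrictAnti hatn)
    -- completeness: all entries of any (2d-3)-block are ≥ 1
    (hpos : ∀ j : ℕ, ∀ α β, 1 ≤ Bc (hatn (j + (2 * d - 3))) (hatn j) α β)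
    -- dual Roth condition (a)
    (ha : ∀ ε : ℝ, 0 < ε → ∃ C : ℝ, 0 < C ∧ ∀ j : ℕ,
      sumNorm (Bc (hatn (j + 1)) (hatn j)) ≤ C * sumNorm (Bc (hatn j) 0) ^ ε) :
    ∀ ε : ℝ, 0 < ε → ∃ C' : ℝ, 0 < C' ∧ ∀ m : ℤ, m ≤ 0 → ∀ α β,
      C' * sumNorm (Bc m 0) ^ (1 - ε) ≤ max 1 (Bc m 0 α β) := by
  intro ε hε
  have hB : IsBackwardCocycle Bc := ⟨hnonneg, hid, hcoc, hmono⟩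
  have hle : ∀ j, hatn j ≤ 0 := fun j => h0 ▸ hdec.antitone (Nat.zero_le j)
  obtain hε1 | hε1 := le_or_gt 1 ε
  · refine ⟨1, one_pos, fun m hm α β => le_max_of_le_left ?_⟩
    rw [one_mul]
    exact Real.rpow_le_one_of_one_le_of_nonpos (hB.one_le_sumNorm hm) (by linarith)
  set N := 2 * d - 3
  obtain ⟨C₀, -, hroth₀⟩ := ha (ε / (N + 1)) (by positivity)
  set C := max C₀ 1
  have hC : 1 ≤ C := le_max_right _ _
  have hroth j :
      sumNorm (Bc (hatn (j + 1)) (hatn j)) ≤ C * sumNorm (Bc (hatn j) 0) ^ (ε / (N + 1)) :=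
    (hroth₀ j).trans <| mul_le_mul_of_nonneg_right (le_max_left _ _)
      (Real.rpow_nonneg (sumNorm_nonneg _) _)
  set K := C * (sumNorm (Bc (hatn N) 0) * sumNorm (1 : Matrix A A ℝ) * C ^ N)
  set M := sumNorm (Bc (hatn (2 * N)) 0)
  have hK : 0 < K := mul_pos (by linarith) <| mul_pos (mul_pos
    (by linarith [hB.one_le_sumNorm (hle N)]) (by linarith [hid 0 ▸ hB.one_le_sumNorm le_rfl]))
    (pow_pos (by linarith) N)
  have hM : 0 < M := by linarith [hB.one_le_sumNorm (hle (2 * N))]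
  refine ⟨min K⁻¹ M⁻¹, by positivity, fun m hm α β => ?_⟩
  refine min_inv_mul_le_max (Real.rpow_nonneg (sumNorm_nonneg _) _) hK hM ?_
  obtain ⟨k, hk, hk'⟩ := hdec.exists_apply_succ_lt_le (h0 ▸ hm : m ≤ hatn 0)
  obtain hsmall | hbig := lt_or_ge k (2 * N)
  · exact .inl <| (Real.rpow_le_self_of_one_le (hB.one_le_sumNorm hm) (by linarith)).trans
      (hB.sumNorm_le_sumNorm_of_le ((hdec.antitone (by omega)).trans hk.le) hm)
  · obtain ⟨k', rfl⟩ := Nat.exists_eq_add_of_le' (show N ≤ k by omega)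
    exact .inr <| hB.sumNorm_rpow_le_mul_apply hdec.antitone h0 hpos hC (by positivity)
      (mul_div_cancel₀ ε (by positivity)).le hε1.le hroth (by omega) hk' hk α β

/-- for a pair (π,τ) of weak dual Roth type with accelerated backward
times (indexed here by `hatn j = n̂_{-j}`, so `hatn 0 = 0` and `hatn` is strictly
decreasing), assuming condition (a) and that every block of `2d-3` consecutive
accelerated steps has all entries of its matrix ≥ 1, one has for all ε > 0 a
constant `C'(ε) > 0` with `max(1, B(m,0)_{αβ}) ≥ C' ‖B(m,0)‖^{1-ε}` for all `m ≤ 0`. -/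
theorem stmt_10 {A : Type*} [Fintype A] [DecidableEq A] [Nonempty A]
    (d : ℕ) (hd : 2 ≤ d) (hcard : Fintype.card A = d)
    (Bc : ℤ → ℤ → Matrix A A ℝ)
    (hnonneg : ∀ m n α β, 0 ≤ Bc m n α β)
    (hid : ∀ n, Bc n n = 1)
    (hcoc : ∀ p m n : ℤ, p ≤ m → m ≤ n → n ≤ 0 → Bc p n = Bc m n * Bc p m)
    (hmono : ∀ m m' : ℤ, m' ≤ m → m ≤ 0 → ∀ α β, Bc m 0 α β ≤ Bc m' 0 α β)
    (hatn : ℕ → ℤ) (h0 : hatn 0 = 0) (hdec : StrictAnti hatn)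
    -- completeness: all entries of any (2d-3)-block are ≥ 1
    (hpos : ∀ j : ℕ, ∀ α β, 1 ≤ Bc (hatn (j + (2 * d - 3))) (hatn j) α β)
    -- dual Roth condition (a)
    (ha : ∀ ε : ℝ, 0 < ε → ∃ C : ℝ, 0 < C ∧ ∀ j : ℕ,
      sumNorm (Bc (hatn (j + 1)) (hatn j)) ≤ C * sumNorm (Bc (hatn j) 0) ^ ε) :
    ∀ ε : ℝ, 0 < ε → ∃ C' : ℝ, 0 < C' ∧ ∀ m : ℤ, m ≤ 0 → ∀ α β,
      C' * sumNorm (Bc m 0) ^ (1 - ε) ≤ max 1 (Bc m 0 α β) :=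
  stmt_10_general d Bc hnonneg hid hcoc hmono hatn h0 hdec hpos ha
end

section
/- Let σ be the permutation of the 2d-element set S = {U_0=V_0, U_1, V_1, …, U_{d−1}, V_{d−1}, U_d=V_d} associated to irreducible combinatorial data π, defined by σ(U_i) = V_j where π_b^{-1}(j+1) = π_t^{-1}(i+1) for 0 ≤ i < d, and σ(V_{j'}) = U_{i'} where π_t^{-1}(i') = π_b^{-1}(j') for 0 < j' ≤ d. Let Σ be the set of cycles of σ and ∂: Γ(T) → R^Σ the boundary operator (∂χ)_C = Σ_{0≤i≤d, U_i ∈ C} (χ(u_i^t − 0) − χ(u_i^t + 0)), with the convention χ(u_0 − 0) = χ(u_d + 0) = 0, for χ constant on each interval I_α^t of the i.e.m. T with data π. Then the image of ∂ restricted to Γ(T) ≅ R^A is exactly the hyperplane R_0^Σ = {x ∈ R^Σ : Σ_C x_C = 0}. -/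
/-- the image of the boundary operator `∂ : Γ(T) ≅ ℝ^A → ℝ^Σ` is the
hyperplane of vectors with vanishing coordinate sum.  Here `S` is the 2d-element
vertex set `{U_0 = V_0, U_1, V_1, …, U_d = V_d}`, `σ` the vertex permutation of the
combinatorial data (positions 0-indexed), and `Σ` is modelled by a surjection
`c : S → Cyc` whose fibers are exactly the cycles of `σ`.  The boundary values are
`χ(u_i^t - 0) = χ(π_t⁻¹(i))`, `χ(u_i^t + 0) = χ(π_t⁻¹(i+1))` (paper indexing),
with the convention `χ(u_0 - 0) = χ(u_d + 0) = 0`. -/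
theorem stmt_14 {A : Type*} [Fintype A] [DecidableEq A]
    (d : ℕ) (hd : 2 ≤ d) (hcard : Fintype.card A = d)
    (πt πb : A ≃ Fin d)
    (hirr : ∀ k : ℕ, 1 ≤ k → k < d →
      {α | ((πt α : ℕ)) < k} ≠ {α | ((πb α : ℕ)) < k})
    {S : Type*} [Fintype S] [DecidableEq S]
    (U V : Fin (d + 1) → S)
    (hU : Function.Injective U) (hV : Function.Injective V)
    (hUV0 : U 0 = V 0) (hUVd : U (Fin.last d) = V (Fin.last d))
    (hdisj : ∀ i j : Fin (d + 1), U i = V j → i = j ∧ (i = 0 ∨ i = Fin.last d))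
    (hrange : ∀ s : S, (∃ i, s = U i) ∨ (∃ j, s = V j))
    (σ : Equiv.Perm S)
    (hσ1 : ∀ p : Fin d, σ (U p.castSucc) = V (Fin.castSucc (πb (πt.symm p))))
    (hσ2 : ∀ p : Fin d, σ (V p.succ) = U (Fin.succ (πt (πb.symm p))))
    {Cyc : Type*} [Fintype Cyc] [DecidableEq Cyc]
    (c : S → Cyc) (hcsurj : Function.Surjective c)
    (hcinv : ∀ s, c (σ s) = c s)
    (hcsep : ∀ s t : S, c s = c t → σ.SameCycle s t) :
    Set.range (fun (χ : A → ℝ) => fun (C : Cyc) =>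
      ∑ i : Fin (d + 1), if c (U i) = C then
        ((if h : 0 < (i : ℕ) then χ (πt.symm ⟨(i : ℕ) - 1, by
            have := i.isLt; omega⟩) else 0) -
         (if h : (i : ℕ) < d then χ (πt.symm ⟨(i : ℕ), h⟩) else 0))
      else 0)
    = {y : Cyc → ℝ | ∑ C, y C = 0} := by
  classical
  -- every cycle contains some `U i`
  have existU : ∀ C : Cyc, ∃ i : Fin (d + 1), c (U i) = C := by
    intro C
    obtain ⟨s, hs⟩ := hcsurj C
    rcases hrange s with ⟨i, rfl⟩ | ⟨j, rfl⟩
    · exact ⟨i, hs⟩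
    · rcases Fin.eq_zero_or_eq_succ j with rfl | ⟨p, rfl⟩
      · exact ⟨0, by rwa [hUV0]⟩
      · refine ⟨Fin.succ (πt (πb.symm p)), ?_⟩
        rw [← hσ2 p, hcinv]; exact hs
  ext y
  simp only [Set.mem_range, Set.mem_setOf_eq]
  constructor
  · rintro ⟨χ, rfl⟩
    set g : ℕ → ℝ := fun k => if h : k < d then χ (πt.symm ⟨k, h⟩) else 0 with hg
    have hterm : ∀ i : Fin (d + 1),
        ((if h : 0 < (i : ℕ) then χ (πt.symm ⟨(i : ℕ) - 1, by
            have := i.isLt; omega⟩) else 0) -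
         (if h : (i : ℕ) < d then χ (πt.symm ⟨(i : ℕ), h⟩) else 0))
        = (if 0 < (i : ℕ) then g ((i : ℕ) - 1) else 0) - g (i : ℕ) := by
      intro i
      congr 1
      · by_cases h : 0 < (i : ℕ)
        · rw [dif_pos h, if_pos h, hg]
          have h2 : (i : ℕ) - 1 < d := by have := i.isLt; omega
          exact (dif_pos (t := fun h => χ (πt.symm ⟨(i : ℕ) - 1, h⟩))
            (e := fun _ => (0 : ℝ)) h2).symm
        · rw [dif_neg h, if_neg h]
    rw [Finset.sum_comm]
    have : ∀ i : Fin (d + 1),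
        (∑ C : Cyc, if c (U i) = C then
          ((if h : 0 < (i : ℕ) then χ (πt.symm ⟨(i : ℕ) - 1, by
              have := i.isLt; omega⟩) else 0) -
           (if h : (i : ℕ) < d then χ (πt.symm ⟨(i : ℕ), h⟩) else 0))
          else 0)
        = (if 0 < (i : ℕ) then g ((i : ℕ) - 1) else 0) - g (i : ℕ) := by
      intro i
      rw [Finset.sum_ite_eq Finset.univ (c (U i))]
      rw [if_pos (Finset.mem_univ _)]
      exact hterm i
    rw [Finset.sum_congr rfl (fun i _ => this i)]
    rw [Fin.sum_univ_eq_sum_range (fun n => (if 0 < n then g (n - 1) else 0) - g n)]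
    rw [Finset.sum_sub_distrib]
    rw [Finset.sum_range_succ' (fun n => if 0 < n then g (n - 1) else 0) d]
    rw [Finset.sum_range_succ g d]
    have hgd : g d = 0 := by rw [hg]; exact dif_neg (lt_irrefl d)
    simp [hgd]
  · intro hy
    -- representative index of each cycle
    have hne : ∀ C : Cyc, (Finset.univ.filter (fun i : Fin (d + 1) => c (U i) = C)).Nonempty := by
      intro C
      obtain ⟨i, hi⟩ := existU C
      exact ⟨i, Finset.mem_filter.2 ⟨Finset.mem_univ _, hi⟩⟩
    set f : Cyc → Fin (d + 1) := fun C =>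
      (Finset.univ.filter (fun i : Fin (d + 1) => c (U i) = C)).min' (hne C) with hf
    have hf1 : ∀ C, c (U (f C)) = C := by
      intro C
      have := Finset.min'_mem _ (hne C)
      exact (Finset.mem_filter.1 this).2
    set F : ℕ → ℝ := fun n => -∑ C ∈ Finset.univ.filter (fun C => ((f C : ℕ)) ≤ n), y C with hF
    refine ⟨fun α => F (πt α), ?_⟩
    funext C
    -- F at boundary values
    have hFd : F d = 0 := by
      have huniv : Finset.univ.filter (fun C : Cyc => ((f C : ℕ)) ≤ d) = Finset.univ := by
        ext C; simp only [Finset.mem_filter, Finset.mem_univ, true_and, iff_true]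
        exact Nat.lt_succ_iff.1 (f C).isLt
      show -∑ C ∈ Finset.univ.filter (fun C : Cyc => ((f C : ℕ)) ≤ d), y C = 0
      rw [huniv, hy]; ring
    have hFsucc : ∀ m : ℕ, F m - F (m + 1)
        = ∑ C ∈ Finset.univ.filter (fun C => ((f C : ℕ)) = m + 1), y C := by
      intro m
      have hstep : Finset.univ.filter (fun C : Cyc => ((f C : ℕ)) ≤ m + 1)
          = Finset.univ.filter (fun C : Cyc => ((f C : ℕ)) ≤ m)
            ∪ Finset.univ.filter (fun C : Cyc => ((f C : ℕ)) = m + 1) := by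
        ext C; simp only [Finset.mem_filter, Finset.mem_univ, true_and, Finset.mem_union]
        omega
      have hdis : Disjoint (Finset.univ.filter (fun C : Cyc => ((f C : ℕ)) ≤ m))
          (Finset.univ.filter (fun C : Cyc => ((f C : ℕ)) = m + 1)) := by
        rw [Finset.disjoint_left]
        intro C h1 h2
        simp only [Finset.mem_filter, Finset.mem_univ, true_and] at h1 h2
        omega
      show (-∑ C ∈ Finset.univ.filter (fun C : Cyc => ((f C : ℕ)) ≤ m), y C)
          - (-∑ C ∈ Finset.univ.filter (fun C : Cyc => ((f C : ℕ)) ≤ m + 1), y C)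
          = ∑ C ∈ Finset.univ.filter (fun C => ((f C : ℕ)) = m + 1), y C
      rw [hstep, Finset.sum_union hdis]
      ring
    have hF0 : (0 : ℝ) - F 0 = ∑ C ∈ Finset.univ.filter (fun C => ((f C : ℕ)) = 0), y C := by
      show (0:ℝ) - (-∑ C ∈ Finset.univ.filter (fun C : Cyc => ((f C : ℕ)) ≤ 0), y C)
          = ∑ C ∈ Finset.univ.filter (fun C => ((f C : ℕ)) = 0), y C
      rw [zero_sub, neg_neg]
      apply Finset.sum_congr _ (fun _ _ => rfl)
      ext C; simp only [Finset.mem_filter, Finset.mem_univ, true_and]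
      omega
    -- the filtered sum is a single term
    have hsingle : ∀ i : Fin (d + 1),
        ∑ C ∈ Finset.univ.filter (fun C => ((f C : ℕ)) = (i : ℕ)), y C
        = if f (c (U i)) = i then y (c (U i)) else 0 := by
      intro i
      have hset : Finset.univ.filter (fun C : Cyc => ((f C : ℕ)) = (i : ℕ))
          = if f (c (U i)) = i then {c (U i)} else ∅ := by
        ext C
        by_cases h : f (c (U i)) = i
        · rw [if_pos h]
          simp only [Finset.mem_filter, Finset.mem_univ, true_and, Finset.mem_singleton]
          constructor
          · intro hC
            have hfi : f C = i := Fin.ext hC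
            have hCU : c (U i) = C := by rw [← hfi]; exact hf1 C
            exact hCU.symm
          · rintro rfl
            rw [h]
        · rw [if_neg h]
          simp only [Finset.mem_filter, Finset.mem_univ, true_and, Finset.notMem_empty,
            iff_false]
          intro hC
          have hfi : f C = i := Fin.ext hC
          have hCU : c (U i) = C := by rw [← hfi]; exact hf1 C
          exact h (by rw [hCU, hfi])
      rw [hset]
      split_ifs with h <;> simp
    -- the i-th term of the big sum
    have hterm : ∀ i : Fin (d + 1),
        ((if h : 0 < (i : ℕ) then F ((i : ℕ) - 1) else 0) -
         (if h : (i : ℕ) < d then F (i : ℕ) else 0))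
        = if f (c (U i)) = i then y (c (U i)) else 0 := by
      intro i
      have hright : (if h : (i : ℕ) < d then F (i : ℕ) else 0) = F (i : ℕ) := by
        by_cases h : (i : ℕ) < d
        · rw [dif_pos h]
        · rw [dif_neg h]
          have : (i : ℕ) = d := by have := i.isLt; omega
          rw [this, hFd]
      rw [hright]
      by_cases h : 0 < (i : ℕ)
      · rw [dif_pos h, ← hsingle i]
        obtain ⟨m, hm⟩ : ∃ m, (i : ℕ) = m + 1 := ⟨(i : ℕ) - 1, by omega⟩
        rw [hm]
        simpa using hFsucc m
      · rw [dif_neg h]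
        have h0 : (i : ℕ) = 0 := by omega
        rw [← hsingle i, h0]
        exact hF0
    -- conclude
    simp only [Equiv.apply_symm_apply]
    have hcongr : ∀ i : Fin (d + 1),
        (if c (U i) = C then
          ((if h : 0 < (i : ℕ) then F ((i : ℕ) - 1) else 0) -
           (if h : (i : ℕ) < d then F (i : ℕ) else 0))
        else 0)
        = if f C = i then y C else 0 := by
      intro i
      by_cases hCi : c (U i) = C
      · rw [if_pos hCi, hterm i, hCi]
      · rw [if_neg hCi]
        by_cases h : f C = i
        · exfalso; apply hCi; rw [← h, hf1]
        · rw [if_neg h]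
      -- done
    calc (∑ i : Fin (d + 1), if c (U i) = C then
            ((if h : 0 < (i : ℕ) then F ((i : ℕ) - 1) else 0) -
             (if h : (i : ℕ) < d then F (i : ℕ) else 0))
          else 0)
        = ∑ i : Fin (d + 1), if f C = i then y C else 0 :=
          Finset.sum_congr rfl (fun i _ => hcongr i)
      _ = y C := by rw [Finset.sum_ite_eq Finset.univ (f C) (fun _ => y C),
            if_pos (Finset.mem_univ _)]
end

section
/- Suppose M = M(π, λ, τ) has no horizontal saddle connections, and along the backward Rauzy–Veech induction define H(n) = Σ_{1≤k<d} (H_k^t(n) − H_k^b(n)), where H_k^t(n) = Σ_{π_t^{(n)}(α) ≤ k} τ_α^{(n)} > 0 and H_k^b(n) = Σ_{π_b^{(n)}(α) ≤ k} τ_α^{(n)} < 0. Then H(n) is strictly decreasing as n decreases: H(n−1) < H(n) for all n ≤ 0; indeed H(n−1) = H(n) + H_{k−1}^b(n) − H_{d−1}^t(n) when the elementary backward step from n to n−1 is of top type with winner α_w and k = π_b^{(n)}(α_w), and H(n−1) = H(n) − H_{k−1}^t(n) + H_{d−1}^b(n) when it is of bottom type with k = π_t^{(n)}(α_w). -/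
/-- `H^t_k` / `H^b_k`: sum of the suspension coordinates of the letters in the first
`k` positions (positions 0-indexed: paper position `≤ k` means 0-indexed `< k`). -/
noncomputable def Hpart {A : Type*} [Fintype A] (pos : A → ℕ) (t : A → ℝ) (k : ℕ) : ℝ :=
  ∑ α ∈ Finset.univ.filter (fun α => pos α < k), t α

/-- `H = Σ_{1 ≤ k < d} (H^t_k - H^b_k)`. -/
noncomputable def Htot {A : Type*} [Fintype A]
    (d : ℕ) (post posb : A → ℕ) (t : A → ℝ) : ℝ :=
  ∑ k ∈ Finset.Ico 1 d, (Hpart post t k - Hpart posb t k)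

open Finset

lemma Hpart_zero {A : Type*} [Fintype A] (pos : A → ℕ) (t : A → ℝ) :
    Hpart pos t 0 = 0 := by simp [Hpart]

lemma Hpart_succ {A : Type*} [Fintype A] [DecidableEq A] (pos : A → ℕ) (t : A → ℝ)
    (hinj : Function.Injective pos) (w : A) (q : ℕ) (hw : pos w = q) :
    Hpart pos t (q + 1) = Hpart pos t q + t w := by
  unfold Hpart
  have hset : Finset.univ.filter (fun α => pos α < q + 1)
      = insert w (Finset.univ.filter (fun α => pos α < q)) := by
    ext α
    simp only [mem_filter, mem_insert, mem_univ, true_and, Nat.lt_succ_iff_lt_or_eq]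
    constructor
    · rintro (h | h)
      · exact Or.inr h
      · exact Or.inl (hinj (h.trans hw.symm))
    · rintro (rfl | h)
      · exact Or.inr hw
      · exact Or.inl h
  rw [hset, Finset.sum_insert (by simp [hw])]
  ring

lemma Hpart_total {A : Type*} [Fintype A] (d : ℕ) (pos : A → ℕ) (t : A → ℝ)
    (h : ∀ α, pos α < d) : Hpart pos t d = ∑ α, t α := by
  unfold Hpart
  rw [Finset.filter_true_of_mem (fun x _ => h x)]

/-- Unchanged side: if the winner sits at the last position, sums up to `k ≤ pos w`
are unaffected by the change of `t` at `w`. -/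
lemma Hpart_other {A : Type*} [Fintype A] [DecidableEq A] (pos : A → ℕ) (t t' : A → ℝ)
    (w : A) (ht' : ∀ α, α ≠ w → t' α = t α)
    (k : ℕ) (hk : k ≤ pos w) :
    Hpart pos t' k = Hpart pos t k := by
  unfold Hpart
  apply Finset.sum_congr rfl
  intro α hα
  simp only [mem_filter, mem_univ, true_and] at hα
  apply ht'
  rintro rfl
  exact absurd hα (not_lt.2 hk)

lemma Hpart_small {A : Type*} [Fintype A] [DecidableEq A] (d : ℕ) (pos pos' : A → ℕ)
    (t t' : A → ℝ) (w l : A)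
    (hinj : Function.Injective pos)
    (hl : pos l = pos w + 1)
    (ht' : ∀ α, α ≠ w → t' α = t α)
    (h1 : ∀ α, pos α ≤ pos w → pos' α = pos α)
    (h2 : pos' l = d - 1)
    (h3 : ∀ α, pos w + 1 < pos α → pos' α = pos α - 1)
    (k : ℕ) (hk : k ≤ pos w) (hkd : k ≤ d - 1) :
    Hpart pos' t' k = Hpart pos t k := by
  unfold Hpart
  have hset : Finset.univ.filter (fun α => pos' α < k)
      = Finset.univ.filter (fun α => pos α < k) := by
    ext α
    simp only [mem_filter, mem_univ, true_and]
    rcases lt_trichotomy (pos α) (pos w + 1) with h | h | h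
    · rw [h1 α (by omega)]
    · have : α = l := hinj (by omega)
      subst this
      constructor
      · intro hc; rw [h2] at hc; omega
      · intro hc; omega
    · rw [h3 α h]
      omega
  rw [hset]
  apply Finset.sum_congr rfl
  intro α hα
  simp only [mem_filter, mem_univ, true_and] at hα
  apply ht'
  rintro rfl
  omega

lemma Hpart_big {A : Type*} [Fintype A] [DecidableEq A] (d : ℕ) (pos pos' : A → ℕ)
    (t t' : A → ℝ) (w l : A)
    (hinj : Function.Injective pos)
    (hl : pos l = pos w + 1)
    (ht'w : t' w = t w + t l)
    (ht' : ∀ α, α ≠ w → t' α = t α)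
    (h1 : ∀ α, pos α ≤ pos w → pos' α = pos α)
    (h2 : pos' l = d - 1)
    (h3 : ∀ α, pos w + 1 < pos α → pos' α = pos α - 1)
    (k : ℕ) (hk : pos w + 1 ≤ k) (hkd : k ≤ d - 1) :
    Hpart pos' t' k = Hpart pos t (k + 1) := by
  unfold Hpart
  set S' := Finset.univ.filter (fun α => pos' α < k) with hS'
  set S := Finset.univ.filter (fun α => pos α < k + 1) with hS
  have hld : 1 ≤ d := by
    have := hk.trans hkd; omega
  have hwl : w ≠ l := by intro h; rw [h] at hl; omega
  have hset : S' = S.erase l := by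
    ext α
    simp only [hS', hS, mem_filter, mem_univ, true_and, mem_erase]
    constructor
    · intro hα
      have hαl : α ≠ l := by
        rintro rfl; rw [h2] at hα; omega
      refine ⟨hαl, ?_⟩
      rcases lt_trichotomy (pos α) (pos w + 1) with h | h | h
      · omega
      · exact absurd (hinj (by omega)) hαl
      · rw [h3 α h] at hα; omega
    · rintro ⟨hαl, hα⟩
      rcases lt_trichotomy (pos α) (pos w + 1) with h | h | h
      · rw [h1 α (by omega)]; omega
      · exact absurd (hinj (by omega)) hαl
      · rw [h3 α h]; omega
  have hwS' : w ∈ S' := by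
    simp only [hS', mem_filter, mem_univ, true_and]
    rw [h1 w le_rfl]; omega
  have hlS : l ∈ S := by
    simp only [hS, mem_filter, mem_univ, true_and]; omega
  have e1 : ∑ α ∈ S', t' α = ∑ α ∈ S', t α + t l := by
    rw [← Finset.sum_erase_add S' t' hwS', ← Finset.sum_erase_add S' t hwS', ht'w]
    rw [Finset.sum_congr rfl (fun α hα => ht' α (Finset.ne_of_mem_erase hα))]
    ring
  have e2 : ∑ α ∈ S.erase l, t α = ∑ α ∈ S, t α - t l := by
    rw [← Finset.sum_erase_add S t hlS]; ring
  rw [e1, hset, e2]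
  ring

lemma tele (f : ℕ → ℝ) (a : ℕ) : ∀ b, a ≤ b →
    ∑ k ∈ Finset.Ico a b, (f (k + 1) - f k) = f b - f a := by
  intro b hb
  induction b, hb using Nat.le_induction with
  | base => simp
  | succ b hb ih => rw [Finset.sum_Ico_succ_top hb, ih]; ring

/-- Changed side: total effect on the sum of the `Hpart`s over `1 ≤ k < d`. -/
lemma changed_sum {A : Type*} [Fintype A] [DecidableEq A] (d : ℕ) (pos pos' : A → ℕ)
    (t t' : A → ℝ) (w l : A)
    (hinj : Function.Injective pos)
    (hpos : ∀ α, pos α < d)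
    (hl : pos l = pos w + 1)
    (ht'w : t' w = t w + t l)
    (ht' : ∀ α, α ≠ w → t' α = t α)
    (h1 : ∀ α, pos α ≤ pos w → pos' α = pos α)
    (h2 : pos' l = d - 1)
    (h3 : ∀ α, pos w + 1 < pos α → pos' α = pos α - 1) :
    ∑ k ∈ Finset.Ico 1 d, Hpart pos' t' k
      = ∑ k ∈ Finset.Ico 1 d, Hpart pos t k
        - Hpart pos t (pos w) - t w + ∑ α, t α := by
  have hpd : pos w + 2 ≤ d := by have := hpos l; omega
  have hsplit : ∀ g : ℕ → ℝ, ∑ k ∈ Finset.Ico 1 d, g k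
      = ∑ k ∈ Finset.Ico 1 (pos w + 1), g k + ∑ k ∈ Finset.Ico (pos w + 1) d, g k :=
    fun g => (Finset.sum_Ico_consecutive g (by omega) (by omega)).symm
  rw [hsplit (fun k => Hpart pos' t' k), hsplit (fun k => Hpart pos t k)]
  have e1 : ∑ k ∈ Finset.Ico 1 (pos w + 1), Hpart pos' t' k
      = ∑ k ∈ Finset.Ico 1 (pos w + 1), Hpart pos t k := by
    refine Finset.sum_congr rfl fun k hk => ?_
    simp only [Finset.mem_Ico] at hk
    exact Hpart_small d pos pos' t t' w l hinj hl ht' h1 h2 h3 k (by omega) (by omega)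
  have e2 : ∑ k ∈ Finset.Ico (pos w + 1) d, Hpart pos' t' k
      = ∑ k ∈ Finset.Ico (pos w + 1) d,
          (Hpart pos t k + (Hpart pos t (k + 1) - Hpart pos t k)) := by
    refine Finset.sum_congr rfl fun k hk => ?_
    simp only [Finset.mem_Ico] at hk
    rw [Hpart_big d pos pos' t t' w l hinj hl ht'w ht' h1 h2 h3 k (by omega) (by omega)]
    ring
  rw [e1, e2, Finset.sum_add_distrib, tele (fun k => Hpart pos t k) (pos w + 1) d (by omega),
    Hpart_total d pos t hpos,
    Hpart_succ pos t hinj w (pos w) rfl]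
  ring

/-- along the backward Rauzy–Veech induction of a translation surface
with no horizontal connection, the quantity `H(n)` strictly decreases:
`H(n-1) < H(n)`, with the explicit formulas
`H(n-1) = H(n) + H^b_{k-1}(n) - H^t_{d-1}(n)` (top type, `k = π_b^{(n)}(α_w)` in paper
indexing, i.e. the 0-indexed position of the winner) and
`H(n-1) = H(n) - H^t_{k-1}(n) + H^b_{d-1}(n)` (bottom type). -/
theorem stmt_16 {A : Type*} [Fintype A] [DecidableEq A]
    (d : ℕ) (hd : 2 ≤ d) (hcard : Fintype.card A = d)
    (πt πb : ℤ → (A ≃ Fin d)) (τ : ℤ → A → ℝ)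
    -- suspension conditions at every backward time
    (hsusp : ∀ n : ℤ, n ≤ 0 → ∀ k : ℕ, 1 ≤ k → k < d →
      0 < Hpart (fun α => ((πt n) α : ℕ)) (τ n) k ∧
      Hpart (fun α => ((πb n) α : ℕ)) (τ n) k < 0)
    -- no horizontal connection: the algorithm never stops
    (hne : ∀ n : ℤ, n ≤ 0 → (∑ α, τ n α) ≠ 0)
    -- winners and losers of the backward steps
    (αw αl : ℤ → A)
    -- backward top step (performed when Σ τ^{(n)} < 0)
    (htop : ∀ n : ℤ, n ≤ 0 → (∑ α, τ n α) < 0 →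
      ((πt n) (αw n) : ℕ) = d - 1 ∧
      ((πb n) (αl n) : ℕ) = ((πb n) (αw n) : ℕ) + 1 ∧
      πt (n - 1) = πt n ∧
      τ (n - 1) (αw n) = τ n (αw n) + τ n (αl n) ∧
      (∀ α, α ≠ αw n → τ (n - 1) α = τ n α) ∧
      (∀ α, ((πb n) α : ℕ) ≤ ((πb n) (αw n) : ℕ) → (πb (n - 1)) α = (πb n) α) ∧
      ((πb (n - 1)) (αl n) : ℕ) = d - 1 ∧
      (∀ α, ((πb n) (αw n) : ℕ) + 1 < ((πb n) α : ℕ) →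
        ((πb (n - 1)) α : ℕ) = ((πb n) α : ℕ) - 1))
    -- backward bottom step (performed when Σ τ^{(n)} > 0)
    (hbot : ∀ n : ℤ, n ≤ 0 → 0 < (∑ α, τ n α) →
      ((πb n) (αw n) : ℕ) = d - 1 ∧
      ((πt n) (αl n) : ℕ) = ((πt n) (αw n) : ℕ) + 1 ∧
      πb (n - 1) = πb n ∧
      τ (n - 1) (αw n) = τ n (αw n) + τ n (αl n) ∧
      (∀ α, α ≠ αw n → τ (n - 1) α = τ n α) ∧
      (∀ α, ((πt n) α : ℕ) ≤ ((πt n) (αw n) : ℕ) → (πt (n - 1)) α = (πt n) α) ∧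
      ((πt (n - 1)) (αl n) : ℕ) = d - 1 ∧
      (∀ α, ((πt n) (αw n) : ℕ) + 1 < ((πt n) α : ℕ) →
        ((πt (n - 1)) α : ℕ) = ((πt n) α : ℕ) - 1)) :
    ∀ n : ℤ, n ≤ 0 →
      Htot d (fun α => ((πt (n - 1)) α : ℕ)) (fun α => ((πb (n - 1)) α : ℕ)) (τ (n - 1)) <
        Htot d (fun α => ((πt n) α : ℕ)) (fun α => ((πb n) α : ℕ)) (τ n) ∧
      ((∑ α, τ n α) < 0 →
        Htot d (fun α => ((πt (n - 1)) α : ℕ)) (fun α => ((πb (n - 1)) α : ℕ)) (τ (n - 1)) =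
          Htot d (fun α => ((πt n) α : ℕ)) (fun α => ((πb n) α : ℕ)) (τ n)
            + Hpart (fun α => ((πb n) α : ℕ)) (τ n) ((πb n) (αw n) : ℕ)
            - Hpart (fun α => ((πt n) α : ℕ)) (τ n) (d - 1)) ∧
      (0 < (∑ α, τ n α) →
        Htot d (fun α => ((πt (n - 1)) α : ℕ)) (fun α => ((πb (n - 1)) α : ℕ)) (τ (n - 1)) =
          Htot d (fun α => ((πt n) α : ℕ)) (fun α => ((πb n) α : ℕ)) (τ n)
            - Hpart (fun α => ((πt n) α : ℕ)) (τ n) ((πt n) (αw n) : ℕ)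
            + Hpart (fun α => ((πb n) α : ℕ)) (τ n) (d - 1)) := by
  intro n hn
  rcases lt_or_gt_of_ne (hne n hn) with hS | hS
  · -- top type
    obtain ⟨hwt, hlb, hπt, hτw, hτ, hb1, hb2, hb3⟩ := htop n hn hS
    have hinjb : Function.Injective (fun α => ((πb n) α : ℕ)) :=
      fun a b h => (πb n).injective (Fin.val_injective h)
    have hinjt : Function.Injective (fun α => ((πt n) α : ℕ)) :=
      fun a b h => (πt n).injective (Fin.val_injective h)
    have hposb : ∀ α, ((πb n) α : ℕ) < d := fun α => ((πb n) α).isLt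
    have hpost : ∀ α, ((πt n) α : ℕ) < d := fun α => ((πt n) α).isLt
    have h1' : ∀ α, ((πb n) α : ℕ) ≤ ((πb n) (αw n) : ℕ) →
        ((πb (n - 1)) α : ℕ) = ((πb n) α : ℕ) := fun α h => by rw [hb1 α h]
    have hB := changed_sum d (fun α => ((πb n) α : ℕ)) (fun α => ((πb (n - 1)) α : ℕ))
      (τ n) (τ (n - 1)) (αw n) (αl n) hinjb hposb hlb hτw hτ h1' hb2 hb3
    have hT : ∑ k ∈ Finset.Ico 1 d, Hpart (fun α => ((πt n) α : ℕ)) (τ (n - 1)) k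
        = ∑ k ∈ Finset.Ico 1 d, Hpart (fun α => ((πt n) α : ℕ)) (τ n) k := by
      refine Finset.sum_congr rfl fun k hk => ?_
      refine Hpart_other _ _ _ (αw n) hτ k ?_
      simp only [Finset.mem_Ico] at hk
      show k ≤ ((πt n) (αw n) : ℕ)
      omega
    have hSd : ∑ α, τ n α
        = Hpart (fun α => ((πt n) α : ℕ)) (τ n) (d - 1) + τ n (αw n) := by
      rw [← Hpart_total d (fun α => ((πt n) α : ℕ)) (τ n) hpost]
      calc Hpart (fun α => ((πt n) α : ℕ)) (τ n) d
          = Hpart (fun α => ((πt n) α : ℕ)) (τ n) ((d - 1) + 1) := by congr 1; omega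
        _ = Hpart (fun α => ((πt n) α : ℕ)) (τ n) (d - 1) + τ n (αw n) :=
            Hpart_succ _ _ hinjt (αw n) (d - 1) hwt
    have heq : Htot d (fun α => ((πt (n - 1)) α : ℕ)) (fun α => ((πb (n - 1)) α : ℕ)) (τ (n - 1))
        = Htot d (fun α => ((πt n) α : ℕ)) (fun α => ((πb n) α : ℕ)) (τ n)
          + Hpart (fun α => ((πb n) α : ℕ)) (τ n) ((πb n) (αw n) : ℕ)
          - Hpart (fun α => ((πt n) α : ℕ)) (τ n) (d - 1) := by
      rw [hπt]
      unfold Htot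
      rw [Finset.sum_sub_distrib, Finset.sum_sub_distrib, hT, hB, hSd]
      ring
    have hpd : ((πb n) (αw n) : ℕ) + 2 ≤ d := by
      have := ((πb n) (αl n)).isLt; omega
    have hHb : Hpart (fun α => ((πb n) α : ℕ)) (τ n) ((πb n) (αw n) : ℕ) ≤ 0 := by
      rcases Nat.eq_zero_or_pos ((πb n) (αw n) : ℕ) with h0 | h1
      · rw [h0, Hpart_zero]
      · exact le_of_lt (hsusp n hn _ h1 (by omega)).2
    have hHt : 0 < Hpart (fun α => ((πt n) α : ℕ)) (τ n) (d - 1) :=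
      (hsusp n hn (d - 1) (by omega) (by omega)).1
    exact ⟨by rw [heq]; linarith, fun _ => heq, fun h => absurd hS (by linarith)⟩
  · -- bottom type
    obtain ⟨hwb, hlt, hπb, hτw, hτ, ht1, ht2, ht3⟩ := hbot n hn hS
    have hinjb : Function.Injective (fun α => ((πb n) α : ℕ)) :=
      fun a b h => (πb n).injective (Fin.val_injective h)
    have hinjt : Function.Injective (fun α => ((πt n) α : ℕ)) :=
      fun a b h => (πt n).injective (Fin.val_injective h)
    have hposb : ∀ α, ((πb n) α : ℕ) < d := fun α => ((πb n) α).isLt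
    have hpost : ∀ α, ((πt n) α : ℕ) < d := fun α => ((πt n) α).isLt
    have h1' : ∀ α, ((πt n) α : ℕ) ≤ ((πt n) (αw n) : ℕ) →
        ((πt (n - 1)) α : ℕ) = ((πt n) α : ℕ) := fun α h => by rw [ht1 α h]
    have hT := changed_sum d (fun α => ((πt n) α : ℕ)) (fun α => ((πt (n - 1)) α : ℕ))
      (τ n) (τ (n - 1)) (αw n) (αl n) hinjt hpost hlt hτw hτ h1' ht2 ht3
    have hB : ∑ k ∈ Finset.Ico 1 d, Hpart (fun α => ((πb n) α : ℕ)) (τ (n - 1)) k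
        = ∑ k ∈ Finset.Ico 1 d, Hpart (fun α => ((πb n) α : ℕ)) (τ n) k := by
      refine Finset.sum_congr rfl fun k hk => ?_
      refine Hpart_other _ _ _ (αw n) hτ k ?_
      simp only [Finset.mem_Ico] at hk
      show k ≤ ((πb n) (αw n) : ℕ)
      omega
    have hSd : ∑ α, τ n α
        = Hpart (fun α => ((πb n) α : ℕ)) (τ n) (d - 1) + τ n (αw n) := by
      rw [← Hpart_total d (fun α => ((πb n) α : ℕ)) (τ n) hposb]
      calc Hpart (fun α => ((πb n) α : ℕ)) (τ n) d
          = Hpart (fun α => ((πb n) α : ℕ)) (τ n) ((d - 1) + 1) := by congr 1; omega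
        _ = Hpart (fun α => ((πb n) α : ℕ)) (τ n) (d - 1) + τ n (αw n) :=
            Hpart_succ _ _ hinjb (αw n) (d - 1) hwb
    have heq : Htot d (fun α => ((πt (n - 1)) α : ℕ)) (fun α => ((πb (n - 1)) α : ℕ)) (τ (n - 1))
        = Htot d (fun α => ((πt n) α : ℕ)) (fun α => ((πb n) α : ℕ)) (τ n)
          - Hpart (fun α => ((πt n) α : ℕ)) (τ n) ((πt n) (αw n) : ℕ)
          + Hpart (fun α => ((πb n) α : ℕ)) (τ n) (d - 1) := by
      rw [hπb]
      unfold Htot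
      rw [Finset.sum_sub_distrib, Finset.sum_sub_distrib, hT, hB, hSd]
      ring
    have hpd : ((πt n) (αw n) : ℕ) + 2 ≤ d := by
      have := ((πt n) (αl n)).isLt; omega
    have hHt : 0 ≤ Hpart (fun α => ((πt n) α : ℕ)) (τ n) ((πt n) (αw n) : ℕ) := by
      rcases Nat.eq_zero_or_pos ((πt n) (αw n) : ℕ) with h0 | h1
      · rw [h0, Hpart_zero]
      · exact le_of_lt (hsusp n hn _ h1 (by omega)).1
    have hHb : Hpart (fun α => ((πb n) α : ℕ)) (τ n) (d - 1) < 0 :=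
      (hsusp n hn (d - 1) (by omega) (by omega)).2
    exact ⟨by rw [heq]; linarith, fun h => absurd hS (by linarith), fun _ => heq⟩
end

section
/- Let M = M(π, λ, τ) have no horizontal saddle connection and let (γ_n)_{n≤0} be its backward Rauzy–Veech rotation number. Then the path cannot be eventually of a single type: the sets T = {n ≤ 0 : γ_{n+1} is of top type} and B = {n ≤ 0 : γ_{n+1} is of bottom type} are both infinite. Concretely, if all backward arrows from some point on were of top type with common winner α_w, then with k = π_b(α_w) one would have k = 1 (since H_{k−1}^b(n) is constant and H(n) converges) and τ_{α_w}^{(n−(d−1))} = τ_{α_w}^{(n)} + Σ_{α ≠ α_w} τ_α with Σ_{α ≠ α_w} τ_α = H_{d−1}^t > 0, contradicting τ_{α_w}^{(n)} < 0 for all n. -/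
lemma Hpart_neg {A : Type*} [Fintype A] (pos : A → ℕ) (t : A → ℝ) (k : ℕ) :
    Hpart pos (fun α => -(t α)) k = -(Hpart pos t k) := by
  simp [Hpart]

lemma aux_l3 {A : Type*} [Fintype A] [DecidableEq A]
    (d : ℕ) (hd : 2 ≤ d)
    (πt πb : ℤ → (A ≃ Fin d)) (τ : ℤ → A → ℝ)
    (hsusp : ∀ n : ℤ, n ≤ 0 → ∀ k : ℕ, 1 ≤ k → k < d →
      0 < Hpart (fun α => ((πt n) α : ℕ)) (τ n) k ∧
      Hpart (fun α => ((πb n) α : ℕ)) (τ n) k < 0)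
    (hne : ∀ n : ℤ, n ≤ 0 → (∑ α, τ n α) ≠ 0)
    (αw αl : ℤ → A)
    (htop : ∀ n : ℤ, n ≤ 0 → (∑ α, τ n α) < 0 →
      ((πt n) (αw n) : ℕ) = d - 1 ∧
      ((πb n) (αl n) : ℕ) = ((πb n) (αw n) : ℕ) + 1 ∧
      πt (n - 1) = πt n ∧
      τ (n - 1) (αw n) = τ n (αw n) + τ n (αl n) ∧
      (∀ α, α ≠ αw n → τ (n - 1) α = τ n α) ∧
      (∀ α, ((πb n) α : ℕ) ≤ ((πb n) (αw n) : ℕ) → (πb (n - 1)) α = (πb n) α) ∧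
      ((πb (n - 1)) (αl n) : ℕ) = d - 1 ∧
      (∀ α, ((πb n) (αw n) : ℕ) + 1 < ((πb n) α : ℕ) →
        ((πb (n - 1)) α : ℕ) = ((πb n) α : ℕ) - 1)) :
    {n : ℤ | n ≤ 0 ∧ 0 < (∑ α, τ n α)}.Infinite := by
  by_contra hfin
  rw [Set.not_infinite] at hfin
  obtain ⟨b, hb⟩ := hfin.bddBelow
  set N : ℤ := min b 0 - 1 with hNdef
  have hN0 : N ≤ 0 := by omega
  have hle0 : ∀ n : ℤ, n ≤ N → n ≤ 0 := fun n hn => by omega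
  have hneg : ∀ n : ℤ, n ≤ N → (∑ α, τ n α) < 0 := by
    intro n hn
    rcases (hne n (hle0 n hn)).lt_or_gt with h | h
    · exact h
    · exfalso
      have : n ∈ {n : ℤ | n ≤ 0 ∧ 0 < (∑ α, τ n α)} := ⟨hle0 n hn, h⟩
      have := hb this
      omega
  have ht := fun (n : ℤ) (hn : n ≤ N) => htop n (hle0 n hn) (hneg n hn)
  have hjle : ∀ j : ℕ, N - (j : ℤ) ≤ N := fun j => by omega
  have hidx : ∀ j : ℕ, (N - ((j : ℕ) + 1 : ℤ) : ℤ) = (N - (j : ℤ)) - 1 := fun j => by ring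
  -- πt is constant
  have hπt : ∀ j : ℕ, πt (N - (j : ℤ)) = πt N := by
    intro j
    induction j with
    | zero => simp
    | succ j ih =>
      have h := (ht (N - (j : ℤ)) (hjle j)).2.2.1
      have e : (N - ((j : ℕ) + 1 : ℤ) : ℤ) = (N - (j : ℤ)) - 1 := by ring
      rw [show ((j + 1 : ℕ) : ℤ) = ((j : ℤ) + 1) by push_cast; ring]
      rw [e, h, ih]
  -- winner is constant
  set w : A := αw N with hwdef
  have hw : ∀ j : ℕ, αw (N - (j : ℤ)) = w := by
    intro j
    have h1 := (ht (N - (j : ℤ)) (hjle j)).1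
    have h2 := (ht N le_rfl).1
    rw [hπt j] at h1
    have : (πt N) (αw (N - (j : ℤ))) = (πt N) w := by
      apply Fin.val_injective; rw [h1, h2]
    exact (πt N).injective this
  -- πb position of w is constant, call it k
  have hπbw : ∀ j : ℕ, πb (N - (j : ℤ)) w = πb N w := by
    intro j
    induction j with
    | zero => simp
    | succ j ih =>
      have h := (ht (N - (j : ℤ)) (hjle j)).2.2.2.2.2.1 w
      rw [hw j] at h
      have h' := h le_rfl
      rw [show ((j + 1 : ℕ) : ℤ) = ((j : ℤ) + 1) by push_cast; ring]
      rw [show (N - ((j : ℤ) + 1) : ℤ) = (N - (j : ℤ)) - 1 by ring, h', ih]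
  set k : ℕ := ((πb N w : Fin d) : ℕ) with hkdef
  have hπtw : ((πt N) w : ℕ) = d - 1 := (ht N le_rfl).1
  -- loser position
  have hl : ∀ j : ℕ, ((πb (N - (j : ℤ))) (αl (N - (j : ℤ))) : ℕ) = k + 1 := by
    intro j
    have h := (ht (N - (j : ℤ)) (hjle j)).2.1
    rw [hw j, hπbw j] at h
    exact h
  have hk2 : k + 2 ≤ d := by
    have := hl 0
    have h2 := ((πb (N - (0 : ℤ))) (αl (N - (0 : ℤ)))).isLt
    omega
  have hlw : ∀ j : ℕ, αl (N - (j : ℤ)) ≠ w := by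
    intro j h
    have := hl j
    rw [h, hπbw j] at this
    omega
  -- τ is constant off w
  have hτ : ∀ j : ℕ, ∀ α, α ≠ w → τ (N - (j : ℤ)) α = τ N α := by
    intro j
    induction j with
    | zero => intro α _; simp
    | succ j ih =>
      intro α hα
      have h := (ht (N - (j : ℤ)) (hjle j)).2.2.2.2.1 α
      rw [hw j] at h
      rw [show ((j + 1 : ℕ) : ℤ) = ((j : ℤ) + 1) by push_cast; ring,
        show (N - ((j : ℤ) + 1) : ℤ) = (N - (j : ℤ)) - 1 by ring, h hα]
      exact ih α hα
  -- the cycling set S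
  set S : Finset A := Finset.univ.filter (fun α => k < ((πb N) α : ℕ)) with hSdef
  have hS : ∀ j : ℕ, ∀ α, k < ((πb (N - (j : ℤ))) α : ℕ) ↔ α ∈ S := by
    intro j
    induction j with
    | zero => intro α; simp [hSdef]
    | succ j ih =>
      intro α
      have hwj := hw j
      have e : (N - (((j : ℕ) + 1 : ℕ) : ℤ) : ℤ) = (N - (j : ℤ)) - 1 := by push_cast; ring
      rw [e]
      by_cases h1 : ((πb (N - (j : ℤ))) α : ℕ) ≤ k
      · have h6 := (ht (N - (j : ℤ)) (hjle j)).2.2.2.2.2.1 α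
        rw [hwj, hπbw j] at h6
        rw [h6 h1]
        constructor
        · intro h; omega
        · intro h; exact absurd (by omega : ¬ k < ((πb (N - (j : ℤ))) α : ℕ)) (by simpa using (ih α).mpr h)
      · push_neg at h1
        by_cases h2 : ((πb (N - (j : ℤ))) α : ℕ) = k + 1
        · have : α = αl (N - (j : ℤ)) := by
            apply (πb (N - (j : ℤ))).injective
            apply Fin.val_injective
            rw [h2, hl j]
          subst this
          have h7 := (ht (N - (j : ℤ)) (hjle j)).2.2.2.2.2.2.1
          rw [h7]
          constructor
          · intro _; exact (ih _).mp h1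
          · intro _; omega
        · have h8 := (ht (N - (j : ℤ)) (hjle j)).2.2.2.2.2.2.2 α
          rw [hwj, hπbw j] at h8
          have h8' := h8 (by omega)
          rw [h8']
          constructor
          · intro _; exact (ih α).mp h1
          · intro _; omega
  have hlS : ∀ j : ℕ, αl (N - (j : ℤ)) ∈ S := by
    intro j
    exact (hS j _).mp (by rw [hl j]; omega)
  set m : ℕ := d - 1 - k with hmdef
  have hm1 : 1 ≤ m := by omega
  set Ssum : ℝ := ∑ α ∈ S, τ N α with hSsumdef
  set Q : ℕ → ℝ := fun j => ∑ α ∈ S, (((πb (N - (j : ℤ))) α : ℕ) : ℝ) * τ N α with hQdef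
  have hQstep : ∀ j : ℕ, Q (j + 1) = Q j + (m : ℝ) * τ N (αl (N - (j : ℤ))) - Ssum := by
    intro j
    have hlSj := hlS j
    have key : ∀ α ∈ S, (((πb ((N - (j : ℤ)) - 1)) α : ℕ) : ℝ) * τ N α =
        (((πb (N - (j : ℤ))) α : ℕ) : ℝ) * τ N α - τ N α +
        (if α = αl (N - (j : ℤ)) then (m : ℝ) * τ N α else 0) := by
      intro α hα
      by_cases hc : α = αl (N - (j : ℤ))
      · subst hc
        rw [if_pos rfl]
        have h7 := (ht (N - (j : ℤ)) (hjle j)).2.2.2.2.2.2.1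
        rw [h7, hl j]
        rw [show d - 1 = k + m by omega]
        push_cast
        ring
      · rw [if_neg hc]
        have hkα : k < ((πb (N - (j : ℤ))) α : ℕ) := (hS j α).mpr hα
        have hne2 : ((πb (N - (j : ℤ))) α : ℕ) ≠ k + 1 := by
          intro h
          exact hc ((πb (N - (j : ℤ))).injective (Fin.val_injective (by rw [h, hl j])))
        have h8 := (ht (N - (j : ℤ)) (hjle j)).2.2.2.2.2.2.2 α
        rw [hw j, hπbw j] at h8
        rw [h8 (by omega)]
        rw [Nat.cast_sub (by omega : 1 ≤ ((πb (N - (j : ℤ))) α : ℕ))]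
        push_cast
        ring
    have e : Q (j + 1) = ∑ α ∈ S, (((πb ((N - (j : ℤ)) - 1)) α : ℕ) : ℝ) * τ N α := by
      simp only [hQdef]
      rw [show (N - ((j + 1 : ℕ) : ℤ) : ℤ) = (N - (j : ℤ)) - 1 by push_cast; ring]
    rw [e, Finset.sum_congr rfl key, Finset.sum_add_distrib, Finset.sum_sub_distrib,
      Finset.sum_ite_eq' S (αl (N - (j : ℤ))) (fun α => (m : ℝ) * τ N α), if_pos hlSj]
    ring
  have hτstep : ∀ j : ℕ, τ (N - ((j : ℕ) + 1 : ℤ)) w = τ (N - (j : ℤ)) w + τ N (αl (N - (j : ℤ))) := by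
    intro j
    have h4 := (ht (N - (j : ℤ)) (hjle j)).2.2.2.1
    rw [hw j] at h4
    rw [show (N - ((j : ℤ) + 1) : ℤ) = (N - (j : ℤ)) - 1 by ring, h4,
      hτ j _ (hlw j)]
  set ψ : ℕ → ℝ := fun j => (m : ℝ) * τ (N - (j : ℤ)) w - Q j with hψdef
  have hψ : ∀ j : ℕ, ψ j = ψ 0 + (j : ℝ) * Ssum := by
    intro j
    induction j with
    | zero => simp
    | succ j ih =>
      have h1 := hτstep j
      have h2 := hQstep j
      simp only [hψdef]
      rw [show ((j + 1 : ℕ) : ℤ) = ((j : ℕ) + 1 : ℤ) by push_cast; ring, h1, h2]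
      simp only [hψdef] at ih
      push_cast
      linear_combination ih
  -- Ssum > 0
  have hSsum : 0 < Ssum := by
    have hE1 : Finset.univ.filter (fun α => ((πt N) α : ℕ) < d - 1) = Finset.univ.erase w := by
      ext α
      simp only [Finset.mem_filter, Finset.mem_univ, true_and, Finset.mem_erase, and_true]
      constructor
      · intro h hα
        rw [hα, hπtw] at h
        omega
      · intro h
        have h1 := ((πt N) α).isLt
        rcases lt_or_eq_of_le (by omega : ((πt N) α : ℕ) ≤ d - 1) with h2 | h2
        · exact h2
        · exact absurd ((πt N).injective (Fin.val_injective (by rw [h2, hπtw]))) h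
    have hE2 : Finset.univ.erase w =
        Finset.univ.filter (fun α => ((πb N) α : ℕ) < k) ∪ S := by
      ext α
      simp only [Finset.mem_erase, Finset.mem_union, Finset.mem_filter, Finset.mem_univ,
        true_and, and_true, hSdef]
      constructor
      · intro h
        have : ((πb N) α : ℕ) ≠ k := by
          intro h2
          exact h ((πb N).injective (Fin.val_injective h2))
        omega
      · intro h hα
        rw [hα] at h
        omega
    have hdisj : Disjoint (Finset.univ.filter (fun α => ((πb N) α : ℕ) < k)) S := by
      rw [Finset.disjoint_left]
      intro α h1 h2
      simp only [Finset.mem_filter, Finset.mem_univ, true_and, hSdef] at h1 h2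
      omega
    have hc : 0 < Hpart (fun α => ((πt N) α : ℕ)) (τ N) (d - 1) :=
      (hsusp N hN0 (d - 1) (by omega) (by omega)).1
    have hb' : Hpart (fun α => ((πb N) α : ℕ)) (τ N) k ≤ 0 := by
      rcases Nat.eq_zero_or_pos k with h | h
      · simp [Hpart, h]
      · exact le_of_lt (hsusp N hN0 k h (by omega)).2
    have heq : Hpart (fun α => ((πt N) α : ℕ)) (τ N) (d - 1) =
        Hpart (fun α => ((πb N) α : ℕ)) (τ N) k + Ssum := by
      simp only [Hpart]
      rw [hE1, hE2, Finset.sum_union hdisj]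
    rw [heq] at hc
    linarith
  -- τ (N - j) w < 0
  have hτw : ∀ j : ℕ, τ (N - (j : ℤ)) w < 0 := by
    intro j
    have hn0 := hle0 _ (hjle j)
    have hpos := (hsusp (N - (j : ℤ)) hn0 (d - 1) (by omega) (by omega)).1
    have hE1 : Finset.univ.filter (fun α => ((πt N) α : ℕ) < d - 1) = Finset.univ.erase w := by
      ext α
      simp only [Finset.mem_filter, Finset.mem_univ, true_and, Finset.mem_erase, and_true]
      constructor
      · intro h hα
        rw [hα, hπtw] at h
        omega
      · intro h
        have h1 := ((πt N) α).isLt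
        rcases lt_or_eq_of_le (by omega : ((πt N) α : ℕ) ≤ d - 1) with h2 | h2
        · exact h2
        · exact absurd ((πt N).injective (Fin.val_injective (by rw [h2, hπtw]))) h
    rw [Hpart, hπt j, hE1, Finset.sum_erase_eq_sub (Finset.mem_univ w)] at hpos
    have hs := hneg _ (hjle j)
    linarith
  -- bound on Q
  set B : ℝ := ∑ α ∈ S, (d : ℝ) * |τ N α| with hBdef
  have hQbound : ∀ j : ℕ, -B ≤ Q j := by
    intro j
    rw [hQdef, hBdef, ← Finset.sum_neg_distrib]
    apply Finset.sum_le_sum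
    intro α _
    have h1 : (((πb (N - (j : ℤ))) α : ℕ) : ℝ) ≤ (d : ℝ) := by
      exact_mod_cast le_of_lt ((πb (N - (j : ℤ))) α).isLt
    have h2 : (0 : ℝ) ≤ (((πb (N - (j : ℤ))) α : ℕ) : ℝ) := by positivity
    nlinarith [abs_nonneg (τ N α), le_abs_self (τ N α), neg_abs_le (τ N α)]
  -- contradiction
  obtain ⟨j, hj⟩ := exists_nat_ge ((B + 1 - ψ 0) / Ssum)
  have hjS : B + 1 - ψ 0 ≤ (j : ℝ) * Ssum := by
    rw [div_le_iff₀ hSsum] at hj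
    linarith
  have h1 : ψ j ≤ B := by
    have h2 := hτw j
    have h3 := hQbound j
    have hm0 : (0 : ℝ) < (m : ℝ) := by exact_mod_cast hm1
    simp only [hψdef]
    nlinarith
  rw [hψ j] at h1
  linarith

/-- Lemma l3: the backward rotation number of a translation surface
with no horizontal connection contains infinitely many arrows of each type: the sets
of backward times at which the step is of top type (`Σ τ^{(n)} < 0`) and of bottom
type (`Σ τ^{(n)} > 0`) are both infinite. -/
theorem stmt_18 {A : Type*} [Fintype A] [DecidableEq A]
    (d : ℕ) (hd : 2 ≤ d) (hcard : Fintype.card A = d)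
    (πt πb : ℤ → (A ≃ Fin d)) (τ : ℤ → A → ℝ)
    (hsusp : ∀ n : ℤ, n ≤ 0 → ∀ k : ℕ, 1 ≤ k → k < d →
      0 < Hpart (fun α => ((πt n) α : ℕ)) (τ n) k ∧
      Hpart (fun α => ((πb n) α : ℕ)) (τ n) k < 0)
    (hne : ∀ n : ℤ, n ≤ 0 → (∑ α, τ n α) ≠ 0)
    (αw αl : ℤ → A)
    (htop : ∀ n : ℤ, n ≤ 0 → (∑ α, τ n α) < 0 →
      ((πt n) (αw n) : ℕ) = d - 1 ∧
      ((πb n) (αl n) : ℕ) = ((πb n) (αw n) : ℕ) + 1 ∧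
      πt (n - 1) = πt n ∧
      τ (n - 1) (αw n) = τ n (αw n) + τ n (αl n) ∧
      (∀ α, α ≠ αw n → τ (n - 1) α = τ n α) ∧
      (∀ α, ((πb n) α : ℕ) ≤ ((πb n) (αw n) : ℕ) → (πb (n - 1)) α = (πb n) α) ∧
      ((πb (n - 1)) (αl n) : ℕ) = d - 1 ∧
      (∀ α, ((πb n) (αw n) : ℕ) + 1 < ((πb n) α : ℕ) →
        ((πb (n - 1)) α : ℕ) = ((πb n) α : ℕ) - 1))
    (hbot : ∀ n : ℤ, n ≤ 0 → 0 < (∑ α, τ n α) →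
      ((πb n) (αw n) : ℕ) = d - 1 ∧
      ((πt n) (αl n) : ℕ) = ((πt n) (αw n) : ℕ) + 1 ∧
      πb (n - 1) = πb n ∧
      τ (n - 1) (αw n) = τ n (αw n) + τ n (αl n) ∧
      (∀ α, α ≠ αw n → τ (n - 1) α = τ n α) ∧
      (∀ α, ((πt n) α : ℕ) ≤ ((πt n) (αw n) : ℕ) → (πt (n - 1)) α = (πt n) α) ∧
      ((πt (n - 1)) (αl n) : ℕ) = d - 1 ∧
      (∀ α, ((πt n) (αw n) : ℕ) + 1 < ((πt n) α : ℕ) →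
        ((πt (n - 1)) α : ℕ) = ((πt n) α : ℕ) - 1)) :
    {n : ℤ | n ≤ 0 ∧ (∑ α, τ n α) < 0}.Infinite ∧
    {n : ℤ | n ≤ 0 ∧ 0 < (∑ α, τ n α)}.Infinite := by
  constructor
  · have h := aux_l3 d hd πb πt (fun n α => -(τ n α))
      (fun n hn k hk1 hkd => by
        rw [Hpart_neg, Hpart_neg]
        have := hsusp n hn k hk1 hkd
        constructor <;> linarith [this.1, this.2])
      (fun n hn => by
        rw [Finset.sum_neg_distrib]
        simpa using hne n hn)
      αw αl
      (fun n hn hlt => by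
        have hlt' : 0 < (∑ α, τ n α) := by
          rw [Finset.sum_neg_distrib] at hlt
          linarith
        obtain ⟨h1, h2, h3, h4, h5, h6, h7, h8⟩ := hbot n hn hlt'
        refine ⟨h1, h2, h3, ?_, fun α hα => ?_, h6, h7, h8⟩
        · show -(τ (n - 1) (αw n)) = -(τ n (αw n)) + -(τ n (αl n))
          rw [h4]; ring
        · show -(τ (n - 1) α) = -(τ n α)
          rw [h5 α hα])
    have hset : {n : ℤ | n ≤ 0 ∧ 0 < (∑ α, (fun n α => -(τ n α)) n α)} =
        {n : ℤ | n ≤ 0 ∧ (∑ α, τ n α) < 0} := by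
      ext n
      simp only [Set.mem_setOf_eq, Finset.sum_neg_distrib]
      constructor <;> exact fun ⟨a, b⟩ => ⟨a, by linarith⟩
    rwa [hset] at h
  · exact aux_l3 d hd πt πb τ hsusp hne αw αl htop
end
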